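/- arXiv:1402.5181 — 14 statements merged into one kernel-verified Lean document; each statement's English description precedes it below -/
import Mathlib

section
/- Let ρ < 0. For a real m×n feedback matrix F define the tracking error ε(ξ₀, t) := (C + D·F) · exp(t·(A + B·F)) · ξ₀ ∈ ℝ^p for ξ₀ ∈ ℝ^n and t ≥ 0, where exp denotes the matrix exponential. Then the following two conditions on F are equivalent: (i) [global ρ-monotonicity] A + B·F is Hurwitz (every complex eigenvalue of A + B·F has negative real part) and for every ξ₀ ∈ ℝ^n and every k ∈ {1,…,p} there exists β ≥ 0 such that |ε(ξ₀,t)_k| ≤ β·exp(ρ·t) for all t ≥ 0 and the function t ↦ ε(ξ₀,t)_k is monotone (nondecreasing or nonincreasing) on [0,∞); (ii) [single-mode outputs] A + B·F is Hurwitz and there exist real numbers λ₁,…,λ_p with λ_k ≤ ρ for every k, such that for every ξ₀ ∈ ℝ^n there exist real coefficients β₁,…,β_p with ε(ξ₀,t)_k = β_k·exp(λ_k·t) for all t ≥ 0 and all k ∈ {1,…,p}. -/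
/-- The continuous-time tracking error `ε(ξ₀,t) = (C+DF)·exp(t(A+BF))·ξ₀`. -/
noncomputable def trackErrC {n m p : ℕ} (A : Matrix (Fin n) (Fin n) ℝ)
    (B : Matrix (Fin n) (Fin m) ℝ) (C : Matrix (Fin p) (Fin n) ℝ)
    (D : Matrix (Fin p) (Fin m) ℝ) (F : Matrix (Fin m) (Fin n) ℝ)
    (ξ₀ : Fin n → ℝ) (t : ℝ) : Fin p → ℝ :=
  (C + D * F).mulVec ((NormedSpace.exp (t • (A + B * F))).mulVec ξ₀)

/-- `M` is Hurwitz: every complex eigenvalue (root of the characteristic polynomial of the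
complexification) has negative real part. -/
def IsHurwitz {n : ℕ} (M : Matrix (Fin n) (Fin n) ℝ) : Prop :=
  ∀ z : ℂ, (Matrix.charpoly (M.map Complex.ofReal)).IsRoot z → z.re < 0

/-!
Fix an output coordinate `k`. The map `ξ₀ ↦ ε(ξ₀, ·)_k` is linear. A monotone function tending
to `0` never changes sign, and a linear family of functions none of which changes sign on
`[0, ∞)` has rank one there: any two of its members are proportional. The family is closed
under `d/dt` (the derivative of `ε(ξ₀, ·)` is `ε((A + BF) ξ₀, ·)`), so its common profile `g`
solves `g' = λ g` and is an exponential; the bound `β e^{ρt}` forces `λ ≤ ρ`. Conversely,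
`β e^{λt}` with `λ ≤ ρ < 0` is monotone and bounded by `|β| e^{ρt}`.
-/

open Matrix Set Filter Topology

theorem mul_nonneg_of_monotoneOn_or_antitoneOn_of_tendsto_zero {α : Type*} [SemilatticeSup α]
    [Nonempty α] {f : α → ℝ} {a : α} (hf : MonotoneOn f (Ici a) ∨ AntitoneOn f (Ici a))
    (hlim : Tendsto f atTop (𝓝 0)) {s t : α} (hs : a ≤ s) (ht : a ≤ t) :
    0 ≤ f s * f t := by
  rcases hf with hf | hf
  · have hle : ∀ u, a ≤ u → f u ≤ 0 := fun u hu =>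
      ge_of_tendsto hlim <| (eventually_ge_atTop u).mono fun v hv => hf hu (hu.trans hv) hv
    exact mul_nonneg_of_nonpos_of_nonpos (hle s hs) (hle t ht)
  · have hge : ∀ u, a ≤ u → 0 ≤ f u := fun u hu =>
      le_of_tendsto hlim <| (eventually_ge_atTop u).mono fun v hv => hf hu (hu.trans hv) hv
    exact mul_nonneg (hge s hs) (hge t ht)

theorem LinearMap.apply_mul_apply_eq_of_forall_mul_nonneg {V ι : Type*} [AddCommGroup V]
    [Module ℝ V] (L : V →ₗ[ℝ] ι → ℝ) {S : Set ι}
    (hL : ∀ v, ∀ i ∈ S, ∀ j ∈ S, 0 ≤ L v i * L v j) (v w : V) {i j : ι} (hi : i ∈ S)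
    (hj : j ∈ S) : L v i * L w j = L v j * L w i := by
  by_contra hne
  -- the combination takes the values `δ` at `i` and `-δ` at `j`, where `δ ≠ 0` is the minor below
  have hu := hL ((L w j + L w i) • v - (L v j + L v i) • w) i hi j hj
  have hd : 0 < (L v i * L w j - L v j * L w i) ^ 2 := by
    have := sub_ne_zero.2 hne
    positivity
  simp only [map_sub, map_smul, Pi.sub_apply, Pi.smul_apply, smul_eq_mul] at hu
  nlinarith

theorem tendsto_zero_of_abs_le_mul_exp {f : ℝ → ℝ} {β ρ : ℝ} (hρ : ρ < 0)
    (hf : ∀ t, 0 ≤ t → |f t| ≤ β * Real.exp (ρ * t)) : Tendsto f atTop (𝓝 0) := by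
  have hexp : Tendsto (fun t => β * Real.exp (ρ * t)) atTop (𝓝 0) := by
    simpa using (Real.tendsto_exp_atBot.comp (tendsto_id.const_mul_atTop_of_neg hρ)).const_mul β
  exact squeeze_zero_norm' ((eventually_ge_atTop 0).mono hf) hexp

theorem le_of_abs_mul_exp_le_mul_exp {c β lam ρ : ℝ} (hc : c ≠ 0)
    (h : ∀ t, 0 ≤ t → |c * Real.exp (lam * t)| ≤ β * Real.exp (ρ * t)) : lam ≤ ρ := by
  by_contra! hlt
  have hgrow : Tendsto (fun t => |c| * Real.exp ((lam - ρ) * t)) atTop atTop :=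
    (Real.tendsto_exp_atTop.comp (tendsto_id.const_mul_atTop (sub_pos.2 hlt))).const_mul_atTop
      (abs_pos.2 hc)
  obtain ⟨t, ht, hβ⟩ := ((eventually_ge_atTop 0).and (hgrow.eventually_gt_atTop β)).exists
  rw [sub_mul, Real.exp_sub, mul_div_assoc', lt_div_iff₀ (Real.exp_pos _)] at hβ
  have := h t ht
  rw [abs_mul, Real.abs_exp] at this
  linarith

theorem eq_mul_exp_of_hasDerivAt_eq_mul {g : ℝ → ℝ} {lam : ℝ}
    (hg : ∀ t, 0 ≤ t → HasDerivAt g (lam * g t) t) {t : ℝ} (ht : 0 ≤ t) :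
    g t = g 0 * Real.exp (lam * t) := by
  have hφ : ∀ u, 0 ≤ u → HasDerivAt (fun u => g u * Real.exp (-lam * u)) 0 u := fun u hu =>
    ((hg u hu).mul ((hasDerivAt_id' u).const_mul (-lam)).exp).congr_deriv (by ring)
  have hconst := constant_of_has_deriv_right_zero
    (fun u hu => (hφ u hu.1).continuousAt.continuousWithinAt)
    (fun u hu => (hφ u hu.1).hasDerivWithinAt) t (right_mem_Icc.2 ht)
  simp only [mul_zero, Real.exp_zero, mul_one] at hconst
  rw [← hconst, mul_assoc, ← Real.exp_add]
  simp

theorem monotoneOn_or_antitoneOn_of_eqOn_mul_exp {f : ℝ → ℝ} {β lam : ℝ} (hlam : lam ≤ 0)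
    (hf : EqOn f (fun t => β * Real.exp (lam * t)) (Ici 0)) :
    MonotoneOn f (Ici 0) ∨ AntitoneOn f (Ici 0) := by
  have hexp : Antitone fun t => Real.exp (lam * t) := fun s t hst =>
    Real.exp_le_exp.2 (mul_le_mul_of_nonpos_left hst hlam)
  rcases le_total 0 β with hβ | hβ
  · exact .inr (((hexp.const_mul hβ).antitoneOn _).congr hf.symm)
  · exact .inl (((hexp.const_mul_of_nonpos hβ).monotoneOn _).congr hf.symm)

theorem abs_le_of_eqOn_mul_exp {f : ℝ → ℝ} {β lam ρ : ℝ} (hlam : lam ≤ ρ)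
    (hf : EqOn f (fun t => β * Real.exp (lam * t)) (Ici 0)) {t : ℝ} (ht : 0 ≤ t) :
    |f t| ≤ |β| * Real.exp (ρ * t) := by
  rw [hf ht, abs_mul, Real.abs_exp]
  gcongr

namespace LinearMap

variable {V : Type*} [AddCommGroup V] [Module ℝ V] (L : V →ₗ[ℝ] ℝ → ℝ) {T : V → V}

theorem eq_mul_exp_of_apply_ne_zero
    (hprop : ∀ v w s t, 0 ≤ s → 0 ≤ t → L v s * L w t = L v t * L w s)
    (hderiv : ∀ v t, 0 ≤ t → HasDerivAt (L v) (L (T v) t) t) {η : V} {t₀ : ℝ} (ht₀ : 0 ≤ t₀)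
    (hη : L η t₀ ≠ 0) :
    L η 0 ≠ 0 ∧ ∀ v t, 0 ≤ t → L v t = L v 0 * Real.exp (L (T η) t₀ / L η t₀ * t) := by
  set lam := L (T η) t₀ / L η t₀
  have hode : ∀ t, 0 ≤ t → HasDerivAt (L η) (lam * L η t) t := fun t ht =>
    (hderiv η t ht).congr_deriv <| by
      rw [div_mul_eq_mul_div, eq_div_iff hη, hprop (T η) η t t₀ ht ht₀]
  have hη_exp := fun t (ht : 0 ≤ t) => eq_mul_exp_of_hasDerivAt_eq_mul hode ht
  have h0 : L η 0 ≠ 0 := fun h => hη (by rw [hη_exp t₀ ht₀, h, zero_mul])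
  refine ⟨h0, fun v t ht => mul_right_cancel₀ h0 ?_⟩
  calc L v t * L η 0 = L v 0 * L η t := hprop v η t 0 ht le_rfl
    _ = L v 0 * Real.exp (lam * t) * L η 0 := by rw [hη_exp t ht]; ring

theorem exists_le_forall_eq_mul_exp {ρ : ℝ} (hρ : ρ < 0)
    (hderiv : ∀ v t, 0 ≤ t → HasDerivAt (L v) (L (T v) t) t)
    (hbound : ∀ v, ∃ β, ∀ t, 0 ≤ t → |L v t| ≤ β * Real.exp (ρ * t))
    (hmono : ∀ v, MonotoneOn (L v) (Ici 0) ∨ AntitoneOn (L v) (Ici 0)) :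
    ∃ lam ≤ ρ, ∀ v t, 0 ≤ t → L v t = L v 0 * Real.exp (lam * t) := by
  have hsign : ∀ v, ∀ s ∈ Ici (0 : ℝ), ∀ t ∈ Ici (0 : ℝ), 0 ≤ L v s * L v t := fun v s hs t ht =>
    have ⟨_, hβ⟩ := hbound v
    mul_nonneg_of_monotoneOn_or_antitoneOn_of_tendsto_zero (hmono v)
      (tendsto_zero_of_abs_le_mul_exp hρ hβ) hs ht
  have hprop : ∀ v w s t, 0 ≤ s → 0 ≤ t → L v s * L w t = L v t * L w s :=
    fun v w _ _ hs ht => L.apply_mul_apply_eq_of_forall_mul_nonneg hsign v w hs ht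
  by_cases hzero : ∀ v t, 0 ≤ t → L v t = 0
  · exact ⟨ρ, le_rfl, fun v t ht => by simp [hzero v t ht, hzero v 0 le_rfl]⟩
  push Not at hzero
  obtain ⟨η, t₀, ht₀, hη⟩ := hzero
  obtain ⟨h0, hexp⟩ := L.eq_mul_exp_of_apply_ne_zero hprop hderiv ht₀ hη
  obtain ⟨β, hβ⟩ := hbound η
  exact ⟨_, le_of_abs_mul_exp_le_mul_exp h0 fun t ht => hexp η t ht ▸ hβ t ht, hexp⟩

end LinearMap

section FreeResponse

variable {ι κ : Type*} [Fintype ι] [DecidableEq ι]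

noncomputable def freeResponse (Cf : Matrix κ ι ℝ) (M : Matrix ι ι ℝ) (k : κ) :
    (ι → ℝ) →ₗ[ℝ] ℝ → ℝ where
  toFun ξ t := (Cf *ᵥ (NormedSpace.exp (t • M) *ᵥ ξ)) k
  map_add' ξ η := by ext t; simp [mulVec_add]
  map_smul' c ξ := by ext t; simp [mulVec_smul]

theorem hasDerivAt_freeResponse (Cf : Matrix κ ι ℝ) (M : Matrix ι ι ℝ) (k : κ) (ξ : ι → ℝ)
    (t : ℝ) : HasDerivAt (freeResponse Cf M k ξ) (freeResponse Cf M k (M *ᵥ ξ) t) t := by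
  -- matrices carry no global norm; any norm inducing the product topology will do
  let _ := Matrix.linftyOpNormedRing (n := ι) (α := ℝ)
  let _ := Matrix.linftyOpNormedAlgebra (R := ℝ) (n := ι) (α := ℝ)
  let Φ : Matrix ι ι ℝ →L[ℝ] ℝ := LinearMap.toContinuousLinearMap
    (LinearMap.proj k ∘ₗ Cf.mulVecLin ∘ₗ (mulVecBilin ℝ ℝ).flip ξ)
  exact (Φ.hasFDerivAt.comp_hasDerivAt t (hasDerivAt_exp_smul_const M t)).congr_deriv <| by
    change (Cf *ᵥ ((NormedSpace.exp (t • M) * M) *ᵥ ξ)) k = (Cf *ᵥ (_ *ᵥ (M *ᵥ ξ))) k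
    simp only [mulVec_mulVec]

end FreeResponse

theorem global_monotonicity_iff_single_mode_continuous_general
    (n m p : ℕ)
    (A : Matrix (Fin n) (Fin n) ℝ) (B : Matrix (Fin n) (Fin m) ℝ)
    (C : Matrix (Fin p) (Fin n) ℝ) (D : Matrix (Fin p) (Fin m) ℝ)
    (ρ : ℝ) (hρ : ρ < 0) (F : Matrix (Fin m) (Fin n) ℝ) :
    (IsHurwitz (A + B * F) ∧
      ∀ (ξ₀ : Fin n → ℝ) (k : Fin p), ∃ β : ℝ, 0 ≤ β ∧
        (∀ t : ℝ, 0 ≤ t → |trackErrC A B C D F ξ₀ t k| ≤ β * Real.exp (ρ * t)) ∧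
        (MonotoneOn (fun t : ℝ => trackErrC A B C D F ξ₀ t k) (Set.Ici (0 : ℝ)) ∨
         AntitoneOn (fun t : ℝ => trackErrC A B C D F ξ₀ t k) (Set.Ici (0 : ℝ))))
    ↔
    (IsHurwitz (A + B * F) ∧
      ∃ lam : Fin p → ℝ, (∀ k, lam k ≤ ρ) ∧
        ∀ ξ₀ : Fin n → ℝ, ∃ β : Fin p → ℝ,
          ∀ t : ℝ, 0 ≤ t → ∀ k : Fin p,
            trackErrC A B C D F ξ₀ t k = β k * Real.exp (lam k * t)) := by
  -- `trackErrC A B C D F ξ₀ t k` unfolds to `L k ξ₀ t`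
  let L := freeResponse (C + D * F) (A + B * F)
  refine and_congr_right fun _ => ⟨fun h => ?_, fun ⟨lam, hlam, h⟩ ξ₀ k => ?_⟩
  · choose lam hlam hmode using fun k => (L k).exists_le_forall_eq_mul_exp hρ
      (fun ξ₀ t _ => hasDerivAt_freeResponse _ _ k ξ₀ t)
      (fun ξ₀ => (h ξ₀ k).imp fun _ hβ => hβ.2.1) (fun ξ₀ => (h ξ₀ k).elim fun _ hβ => hβ.2.2)
    exact ⟨lam, hlam, fun ξ₀ => ⟨fun k => L k ξ₀ 0, fun t ht k => hmode k ξ₀ t ht⟩⟩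
  · obtain ⟨β, hβ⟩ := h ξ₀
    have hmode : EqOn (L k ξ₀) (fun t => β k * Real.exp (lam k * t)) (Ici 0) :=
      fun t ht => hβ t ht k
    exact ⟨|β k|, abs_nonneg _, fun t ht => abs_le_of_eqOn_mul_exp (hlam k) hmode ht,
      monotoneOn_or_antitoneOn_of_eqOn_mul_exp ((hlam k).trans hρ.le) hmode⟩

theorem global_monotonicity_iff_single_mode_continuous
    (n m p : ℕ) (hn : 0 < n) (hm : 0 < m) (hp : 0 < p)
    (A : Matrix (Fin n) (Fin n) ℝ) (B : Matrix (Fin n) (Fin m) ℝ)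
    (C : Matrix (Fin p) (Fin n) ℝ) (D : Matrix (Fin p) (Fin m) ℝ)
    (ρ : ℝ) (hρ : ρ < 0) (F : Matrix (Fin m) (Fin n) ℝ) :
    (IsHurwitz (A + B * F) ∧
      ∀ (ξ₀ : Fin n → ℝ) (k : Fin p), ∃ β : ℝ, 0 ≤ β ∧
        (∀ t : ℝ, 0 ≤ t → |trackErrC A B C D F ξ₀ t k| ≤ β * Real.exp (ρ * t)) ∧
        (MonotoneOn (fun t : ℝ => trackErrC A B C D F ξ₀ t k) (Set.Ici (0 : ℝ)) ∨
         AntitoneOn (fun t : ℝ => trackErrC A B C D F ξ₀ t k) (Set.Ici (0 : ℝ))))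
    ↔
    (IsHurwitz (A + B * F) ∧
      ∃ lam : Fin p → ℝ, (∀ k, lam k ≤ ρ) ∧
        ∀ ξ₀ : Fin n → ℝ, ∃ β : Fin p → ℝ,
          ∀ t : ℝ, 0 ≤ t → ∀ k : Fin p,
            trackErrC A B C D F ξ₀ t k = β k * Real.exp (lam k * t)) :=
  global_monotonicity_iff_single_mode_continuous_general n m p A B C D ρ hρ F
end

section
/- Let ρ ∈ (0,1). For a real m×n feedback matrix F define the discrete-time tracking error ε(ξ₀, t) := (C + D·F) · (A + B·F)^t · ξ₀ ∈ ℝ^p for ξ₀ ∈ ℝ^n and t ∈ ℕ. Then the following two conditions on F are equivalent: (i) A + B·F is Schur (every complex eigenvalue of A + B·F has modulus < 1) and for every ξ₀ ∈ ℝ^n and every k ∈ {1,…,p} there exists β ≥ 0 such that |ε(ξ₀,t)_k| ≤ β·ρ^t for all t ∈ ℕ and the sequence t ↦ ε(ξ₀,t)_k is monotone (nondecreasing or nonincreasing); (ii) A + B·F is Schur and there exist real numbers λ₁,…,λ_p with 0 ≤ λ_k ≤ ρ for every k, such that for every ξ₀ ∈ ℝ^n there exist real coefficients β₁,…,β_p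 with ε(ξ₀,t)_k = β_k·λ_k^t for all t ∈ ℕ and all k ∈ {1,…,p}. -/
/-! Fix an output row `f` and the closed-loop map `T`. A monotone sequence `t ↦ f (Tᵗ v)` that
decays geometrically converges monotonically to `0`, so `f v > 0` forces `f (T v) ≥ 0`. A linear
form that is nonnegative on the open half-space `{f > 0}` is a nonnegative multiple `c • f`; hence
`f ∘ Tᵗ = cᵗ • f`, and the decay rate gives `c ≤ ρ`. Conversely `t ↦ b cᵗ` is monotone whenever
`0 ≤ c ≤ 1`. -/

/-- The discrete-time tracking error `ε(ξ₀,t) = (C+DF)·(A+BF)^t·ξ₀`. -/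
def trackErrD {n m p : ℕ} (A : Matrix (Fin n) (Fin n) ℝ)
    (B : Matrix (Fin n) (Fin m) ℝ) (C : Matrix (Fin p) (Fin n) ℝ)
    (D : Matrix (Fin p) (Fin m) ℝ) (F : Matrix (Fin m) (Fin n) ℝ)
    (ξ₀ : Fin n → ℝ) (t : ℕ) : Fin p → ℝ :=
  (C + D * F).mulVec (((A + B * F) ^ t).mulVec ξ₀)

/-- `M` is Schur: every complex eigenvalue (root of the characteristic polynomial of the
complexification) has modulus strictly smaller than one. -/
def IsSchur {n : ℕ} (M : Matrix (Fin n) (Fin n) ℝ) : Prop :=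
  ∀ z : ℂ, (Matrix.charpoly (M.map Complex.ofReal)).IsRoot z → ‖z‖ < 1

open Filter Topology

theorem nonneg_of_tendsto_zero_of_monotone_or_antitone {u : ℕ → ℝ}
    (hu : Tendsto u atTop (𝓝 0)) (hmono : Monotone u ∨ Antitone u) (h0 : 0 < u 0) (t : ℕ) :
    0 ≤ u t := by
  rcases hmono with hm | ha
  · exact absurd (hm.ge_of_tendsto hu 0) h0.not_ge
  · exact ha.le_of_tendsto hu t

theorem abs_le_of_forall_abs_mul_pow_le {a c β ρ : ℝ} (ha : a ≠ 0) (hρ : 0 < ρ)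
    (h : ∀ t : ℕ, |a * c ^ t| ≤ β * ρ ^ t) : |c| ≤ ρ := by
  by_contra! hlt
  obtain ⟨t, ht⟩ := pow_unbounded_of_one_lt (β / |a|) ((one_lt_div hρ).2 hlt)
  have := h t
  rw [div_pow, lt_div_iff₀ (pow_pos hρ t), div_mul_eq_mul_div, div_lt_iff₀ (abs_pos.2 ha)] at ht
  rw [abs_mul, abs_pow] at this
  nlinarith [abs_pos.2 ha]

theorem monotone_or_antitone_mul_pow {b c : ℝ} (hc0 : 0 ≤ c) (hc1 : c ≤ 1) :
    Monotone (fun t : ℕ ↦ b * c ^ t) ∨ Antitone (fun t : ℕ ↦ b * c ^ t) := by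
  rcases le_or_gt 0 b with hb | hb
  · exact .inr ((pow_right_anti₀ hc0 hc1).const_mul hb)
  · exact .inl ((pow_right_anti₀ hc0 hc1).const_mul_of_nonpos hb.le)

section
variable {V : Type*} [AddCommGroup V] [Module ℝ V]

theorem LinearMap.exists_nonneg_smul_eq_of_pos_imp_nonneg {f g : V →ₗ[ℝ] ℝ} (hf : f ≠ 0)
    (h : ∀ v, 0 < f v → 0 ≤ g v) : ∃ c : ℝ, 0 ≤ c ∧ g = c • f := by
  obtain ⟨w, hw⟩ : ∃ w, f w = 1 := by
    obtain ⟨w, hw⟩ := DFunLike.ne_iff.1 hf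
    exact ⟨(f w)⁻¹ • w, by simp [inv_mul_cancel₀ hw]⟩
  -- `s ↦ s * g v + g w` is nonnegative on all of `ℝ` when `f v = 0`, so its slope vanishes.
  have hker : ker f ≤ ker g := by
    intro v hv
    rw [mem_ker] at hv ⊢
    have hline : ∀ s : ℝ, 0 ≤ s * g v + g w := fun s ↦ by
      simpa [hv, hw] using h (s • v + w)
    by_contra hne
    have := hline (-(g w + 1) / g v)
    rw [div_mul_cancel₀ _ hne] at this
    linarith
  have hspan : g ∈ Submodule.span ℝ (Set.range fun _ : Unit ↦ f) :=
    mem_span_of_iInf_ker_le_ker (by simpa using hker)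
  rw [Set.range_const] at hspan
  obtain ⟨c, rfl⟩ := Submodule.mem_span_singleton.1 hspan
  exact ⟨c, by simpa [hw] using h w (hw ▸ one_pos), rfl⟩

theorem LinearMap.comp_pow_apply_of_comp_eq_smul {f : V →ₗ[ℝ] ℝ} {T : Module.End ℝ V} {c : ℝ}
    (h : f ∘ₗ T = c • f) (t : ℕ) (v : V) : f ((T ^ t) v) = c ^ t * f v := by
  induction t generalizing v with
  | zero => simp
  | succ t ih =>
    rw [pow_succ, Module.End.mul_apply, ih, ← comp_apply, h, smul_apply, smul_eq_mul, pow_succ]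
    ring
theorem LinearMap.exists_eq_mul_pow_of_monotone_of_le_geometric {T : Module.End ℝ V}
    {f : V →ₗ[ℝ] ℝ} {ρ : ℝ} (hρ0 : 0 < ρ) (hρ1 : ρ < 1)
    (h : ∀ v, ∃ β : ℝ, (∀ t : ℕ, |f ((T ^ t) v)| ≤ β * ρ ^ t) ∧
      (Monotone (fun t : ℕ ↦ f ((T ^ t) v)) ∨ Antitone (fun t : ℕ ↦ f ((T ^ t) v)))) :
    ∃ c : ℝ, 0 ≤ c ∧ c ≤ ρ ∧ ∀ v t, f ((T ^ t) v) = f v * c ^ t := by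
  by_cases hf : f = 0
  · exact ⟨0, le_rfl, hρ0.le, by simp [hf]⟩
  have hstep : ∀ v, 0 < f v → 0 ≤ (f ∘ₗ T) v := fun v hv ↦ by
    obtain ⟨β, hβ, hmono⟩ := h v
    have hlim : Tendsto (fun t : ℕ ↦ f ((T ^ t) v)) atTop (𝓝 0) :=
      squeeze_zero_norm hβ <| by
        simpa using (tendsto_pow_atTop_nhds_zero_of_lt_one hρ0.le hρ1).const_mul β
    simpa using nonneg_of_tendsto_zero_of_monotone_or_antitone hlim hmono (by simpa using hv) 1
  obtain ⟨c, hc0, hc⟩ := exists_nonneg_smul_eq_of_pos_imp_nonneg hf hstep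
  have hpow := comp_pow_apply_of_comp_eq_smul hc
  obtain ⟨w, hw⟩ := DFunLike.ne_iff.1 hf
  obtain ⟨β, hβ, -⟩ := h w
  have hcρ : |c| ≤ ρ := abs_le_of_forall_abs_mul_pow_le hw hρ0 fun t ↦ by
    simpa [hpow, mul_comm] using hβ t
  exact ⟨c, hc0, (abs_of_nonneg hc0).symm.trans_le hcρ, fun v t ↦ by rw [hpow, mul_comm]⟩
end

theorem trackErrD_apply_eq {n m p : ℕ} (A : Matrix (Fin n) (Fin n) ℝ)
    (B : Matrix (Fin n) (Fin m) ℝ) (C : Matrix (Fin p) (Fin n) ℝ)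
    (D : Matrix (Fin p) (Fin m) ℝ) (F : Matrix (Fin m) (Fin n) ℝ)
    (ξ₀ : Fin n → ℝ) (t : ℕ) (k : Fin p) :
    trackErrD A B C D F ξ₀ t k =
      (LinearMap.proj k ∘ₗ Matrix.toLin' (C + D * F)) ((Matrix.toLin' (A + B * F) ^ t) ξ₀) := by
  rw [← Matrix.toLin'_pow, LinearMap.comp_apply, Matrix.toLin'_apply, Matrix.toLin'_apply]
  rfl

theorem global_monotonicity_iff_single_mode_discrete_general
    (n m p : ℕ)
    (A : Matrix (Fin n) (Fin n) ℝ) (B : Matrix (Fin n) (Fin m) ℝ)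
    (C : Matrix (Fin p) (Fin n) ℝ) (D : Matrix (Fin p) (Fin m) ℝ)
    (ρ : ℝ) (hρ0 : 0 < ρ) (hρ1 : ρ < 1) (F : Matrix (Fin m) (Fin n) ℝ) :
    (IsSchur (A + B * F) ∧
      ∀ (ξ₀ : Fin n → ℝ) (k : Fin p), ∃ β : ℝ, 0 ≤ β ∧
        (∀ t : ℕ, |trackErrD A B C D F ξ₀ t k| ≤ β * ρ ^ t) ∧
        (Monotone (fun t : ℕ => trackErrD A B C D F ξ₀ t k) ∨
         Antitone (fun t : ℕ => trackErrD A B C D F ξ₀ t k)))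
    ↔
    (IsSchur (A + B * F) ∧
      ∃ lam : Fin p → ℝ, (∀ k, 0 ≤ lam k ∧ lam k ≤ ρ) ∧
        ∀ ξ₀ : Fin n → ℝ, ∃ β : Fin p → ℝ,
          ∀ t : ℕ, ∀ k : Fin p,
            trackErrD A B C D F ξ₀ t k = β k * lam k ^ t) := by
  refine and_congr_right fun _ ↦ ⟨fun h ↦ ?_, fun ⟨lam, hlam, hmode⟩ ξ₀ k ↦ ?_⟩
  · simp only [trackErrD_apply_eq] at h ⊢
    choose lam hlam0 hlamρ hmode using fun k ↦
      LinearMap.exists_eq_mul_pow_of_monotone_of_le_geometric hρ0 hρ1 fun ξ₀ ↦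
        let ⟨β, _, hβ, hmono⟩ := h ξ₀ k; ⟨β, hβ, hmono⟩
    exact ⟨lam, fun k ↦ ⟨hlam0 k, hlamρ k⟩, fun ξ₀ ↦ ⟨_, fun t k ↦ hmode k ξ₀ t⟩⟩
  · obtain ⟨β, hβ⟩ := hmode ξ₀
    obtain ⟨hlam0, hlamρ⟩ := hlam k
    simp only [hβ]
    refine ⟨|β k|, abs_nonneg _, fun t ↦ ?_,
      monotone_or_antitone_mul_pow hlam0 (hlamρ.trans hρ1.le)⟩
    rw [abs_mul, abs_pow, abs_of_nonneg hlam0]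
    gcongr

theorem global_monotonicity_iff_single_mode_discrete
    (n m p : ℕ) (hn : 0 < n) (hm : 0 < m) (hp : 0 < p)
    (A : Matrix (Fin n) (Fin n) ℝ) (B : Matrix (Fin n) (Fin m) ℝ)
    (C : Matrix (Fin p) (Fin n) ℝ) (D : Matrix (Fin p) (Fin m) ℝ)
    (ρ : ℝ) (hρ0 : 0 < ρ) (hρ1 : ρ < 1) (F : Matrix (Fin m) (Fin n) ℝ) :
    (IsSchur (A + B * F) ∧
      ∀ (ξ₀ : Fin n → ℝ) (k : Fin p), ∃ β : ℝ, 0 ≤ β ∧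
        (∀ t : ℕ, |trackErrD A B C D F ξ₀ t k| ≤ β * ρ ^ t) ∧
        (Monotone (fun t : ℕ => trackErrD A B C D F ξ₀ t k) ∨
         Antitone (fun t : ℕ => trackErrD A B C D F ξ₀ t k)))
    ↔
    (IsSchur (A + B * F) ∧
      ∃ lam : Fin p → ℝ, (∀ k, 0 ≤ lam k ∧ lam k ≤ ρ) ∧
        ∀ ξ₀ : Fin n → ℝ, ∃ β : Fin p → ℝ,
          ∀ t : ℕ, ∀ k : Fin p,
            trackErrD A B C D F ξ₀ t k = β k * lam k ^ t) :=
  global_monotonicity_iff_single_mode_discrete_general n m p A B C D ρ hρ0 hρ1 F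
end

section
/- Let μ ∈ ℝ and j ∈ {1,…,p}. Assume that the linear map w ↦ (Bw, Dw) from ℝ^m to ℝ^n × ℝ^p is injective, and that the Rosenbrock matrix P(μ) has full row rank n + p (equivalently, the associated linear map ℝ^{n+m} → ℝ^{n+p} is surjective). Then the set R⋆_j(μ) \ R̂_j(μ) is a null set with respect to any additive Haar measure on the subspace R⋆_j(μ) of ℝ^n. -/
open MeasureTheory

/-- `R⋆(μ)` as a set. -/
def RstarSet {n m p : ℕ} (A : Matrix (Fin n) (Fin n) ℝ) (B : Matrix (Fin n) (Fin m) ℝ)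
    (C : Matrix (Fin p) (Fin n) ℝ) (D : Matrix (Fin p) (Fin m) ℝ) (μ : ℝ) :
    Set (Fin n → ℝ) :=
  {v | ∃ w : Fin m → ℝ, (A - μ • 1).mulVec v + B.mulVec w = 0 ∧ C.mulVec v + D.mulVec w = 0}

/-- `R⋆_j(μ)` as a set. -/
def RstarJSet {n m p : ℕ} (A : Matrix (Fin n) (Fin n) ℝ) (B : Matrix (Fin n) (Fin m) ℝ)
    (C : Matrix (Fin p) (Fin n) ℝ) (D : Matrix (Fin p) (Fin m) ℝ) (μ : ℝ) (j : Fin p) :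
    Set (Fin n → ℝ) :=
  {v | ∃ w : Fin m → ℝ, (A - μ • 1).mulVec v + B.mulVec w = 0 ∧
    ∀ i : Fin p, i ≠ j → (C.mulVec v + D.mulVec w) i = 0}

/-- `R̂_j(μ)` as a set. -/
def RhatJSet {n m p : ℕ} (A : Matrix (Fin n) (Fin n) ℝ) (B : Matrix (Fin n) (Fin m) ℝ)
    (C : Matrix (Fin p) (Fin n) ℝ) (D : Matrix (Fin p) (Fin m) ℝ) (μ : ℝ) (j : Fin p) :
    Set (Fin n → ℝ) :=
  {v | ∃ β : ℝ, β ≠ 0 ∧ ∃ w : Fin m → ℝ, (A - μ • 1).mulVec v + B.mulVec w = 0 ∧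
    C.mulVec v + D.mulVec w = β • (Pi.single j 1 : Fin p → ℝ)}

/-- `R⋆(μ)` as a submodule. -/
def RstarSubmodule {n m p : ℕ} (A : Matrix (Fin n) (Fin n) ℝ) (B : Matrix (Fin n) (Fin m) ℝ)
    (C : Matrix (Fin p) (Fin n) ℝ) (D : Matrix (Fin p) (Fin m) ℝ) (μ : ℝ) :
    Submodule ℝ (Fin n → ℝ) where
  carrier := RstarSet A B C D μ
  zero_mem' := ⟨0, by simp [Matrix.mulVec_zero], by simp [Matrix.mulVec_zero]⟩
  add_mem' := by
    rintro v₁ v₂ ⟨w₁, h11, h12⟩ ⟨w₂, h21, h22⟩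
    refine ⟨w₁ + w₂, ?_, ?_⟩
    · rw [Matrix.mulVec_add, Matrix.mulVec_add]
      rw [show (A - μ • 1).mulVec v₁ + (A - μ • 1).mulVec v₂ + (B.mulVec w₁ + B.mulVec w₂)
          = ((A - μ • 1).mulVec v₁ + B.mulVec w₁) + ((A - μ • 1).mulVec v₂ + B.mulVec w₂) by abel]
      rw [h11, h21, add_zero]
    · rw [Matrix.mulVec_add, Matrix.mulVec_add]
      rw [show C.mulVec v₁ + C.mulVec v₂ + (D.mulVec w₁ + D.mulVec w₂)
          = (C.mulVec v₁ + D.mulVec w₁) + (C.mulVec v₂ + D.mulVec w₂) by abel]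
      rw [h12, h22, add_zero]
  smul_mem' := by
    rintro c v ⟨w, h1, h2⟩
    refine ⟨c • w, ?_, ?_⟩
    · rw [Matrix.mulVec_smul, Matrix.mulVec_smul, ← smul_add, h1, smul_zero]
    · rw [Matrix.mulVec_smul, Matrix.mulVec_smul, ← smul_add, h2, smul_zero]

/-- Proposition 2: if the input map is injective and the Rosenbrock matrix `P(μ)` is
surjective (full row rank `n+p`), then `R⋆_j(μ) \ R̂_j(μ)` is a null set for every additive
Haar measure on the subspace `R⋆_j(μ)`. -/
theorem RstarJ_diff_RhatJ_null
    (n m p : ℕ) (hn : 0 < n) (hm : 0 < m) (hp : 0 < p)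
    (A : Matrix (Fin n) (Fin n) ℝ) (B : Matrix (Fin n) (Fin m) ℝ)
    (C : Matrix (Fin p) (Fin n) ℝ) (D : Matrix (Fin p) (Fin m) ℝ)
    (μ : ℝ) (j : Fin p)
    (hinj : Function.Injective fun w : Fin m → ℝ => (B.mulVec w, D.mulVec w))
    (hsurj : Function.Surjective fun vw : (Fin n → ℝ) × (Fin m → ℝ) =>
      ((A - μ • 1).mulVec vw.1 + B.mulVec vw.2, C.mulVec vw.1 + D.mulVec vw.2))
    (S : Submodule ℝ (Fin n → ℝ)) (hS : (S : Set (Fin n → ℝ)) = RstarJSet A B C D μ j)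
    (ν : Measure ↥S) [ν.IsAddHaarMeasure] :
    ν {x : ↥S | (x : Fin n → ℝ) ∉ RhatJSet A B C D μ j} = 0 := by
  classical
  by_cases hcase : ∃ u : Fin m → ℝ, B.mulVec u = 0 ∧
      (∀ i : Fin p, i ≠ j → D.mulVec u i = 0) ∧ D.mulVec u j ≠ 0
  · -- the set is empty
    obtain ⟨u, hBu, hDu, hDuj⟩ := hcase
    have hempty : {x : ↥S | (x : Fin n → ℝ) ∉ RhatJSet A B C D μ j} = ∅ := by
      ext x
      simp only [Set.mem_setOf_eq, Set.mem_empty_iff_false, iff_false, not_not]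
      have hx : (x : Fin n → ℝ) ∈ RstarJSet A B C D μ j := by
        rw [← hS]; exact x.2
      obtain ⟨w, h1, h2⟩ := hx
      set β := (C.mulVec ↑x + D.mulVec w) j with hβ
      set t := (1 - β) / (D.mulVec u j) with ht
      refine ⟨1, one_ne_zero, w + t • u, ?_, ?_⟩
      · rw [Matrix.mulVec_add, Matrix.mulVec_smul, hBu, smul_zero, add_zero]; exact h1
      · rw [Matrix.mulVec_add, Matrix.mulVec_smul]
        funext i
        by_cases hij : i = j
        · subst hij
          have : (C.mulVec ↑x + (D.mulVec w + t • D.mulVec u)) i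
              = β + t * D.mulVec u i := by
            simp only [Pi.add_apply, Pi.smul_apply, smul_eq_mul, hβ]; ring
          rw [this, ht]
          have : (1 - β) / D.mulVec u i * D.mulVec u i = 1 - β :=
            div_mul_cancel₀ _ hDuj
          rw [this]
          simp [Pi.single_eq_same]
        · have : (C.mulVec ↑x + (D.mulVec w + t • D.mulVec u)) i
              = (C.mulVec ↑x + D.mulVec w) i + t * D.mulVec u i := by
            simp only [Pi.add_apply, Pi.smul_apply, smul_eq_mul]; ring
          rw [this, h2 i hij, hDu i hij, mul_zero, add_zero]
          simp [Pi.single_eq_of_ne hij]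
    rw [hempty, measure_empty]
  · push_neg at hcase
    -- hcase : ∀ u, B.mulVec u = 0 → (∀ i ≠ j, D.mulVec u i = 0) → D.mulVec u j = 0
    set T : Submodule ℝ (Fin n → ℝ) := RstarSubmodule A B C D μ with hT
    have hsub : {x : ↥S | (x : Fin n → ℝ) ∉ RhatJSet A B C D μ j}
        ⊆ (T.comap S.subtype : Set ↥S) := by
      intro x hx
      have hxS : (x : Fin n → ℝ) ∈ RstarJSet A B C D μ j := by
        rw [← hS]; exact x.2
      obtain ⟨w, h1, h2⟩ := hxS
      have hβ : (C.mulVec ↑x + D.mulVec w) j = 0 := by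
        by_contra hβ
        exact hx ⟨(C.mulVec ↑x + D.mulVec w) j, hβ, w, h1, by
          funext i
          by_cases hij : i = j
          · subst hij; simp [Pi.single_eq_same]
          · rw [h2 i hij]; simp [Pi.single_eq_of_ne hij]⟩
      refine ⟨w, h1, ?_⟩
      funext i
      by_cases hij : i = j
      · subst hij; exact hβ
      · exact h2 i hij
    have hne : T.comap S.subtype ≠ ⊤ := by
      obtain ⟨⟨v, w⟩, hvw⟩ := hsurj (0, Pi.single j 1)
      have h1 : (A - μ • 1).mulVec v + B.mulVec w = 0 := congrArg Prod.fst hvw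
      have h2 : C.mulVec v + D.mulVec w = Pi.single j 1 := congrArg Prod.snd hvw
      have hvS : v ∈ S := by
        have : v ∈ (S : Set (Fin n → ℝ)) := by
          rw [hS]
          exact ⟨w, h1, fun i hij => by rw [h2]; simp [Pi.single_eq_of_ne hij]⟩
        exact this
      intro htop
      have hvT : v ∈ T := by
        have : (⟨v, hvS⟩ : ↥S) ∈ T.comap S.subtype := htop ▸ Submodule.mem_top
        exact this
      obtain ⟨w'', hw1, hw2⟩ := hvT
      set u := w - w'' with hu
      have hBu : B.mulVec u = 0 := by
        rw [hu, Matrix.mulVec_sub]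
        have : B.mulVec w - B.mulVec w''
            = ((A - μ • 1).mulVec v + B.mulVec w)
              - ((A - μ • 1).mulVec v + B.mulVec w'') := by abel
        rw [this, h1, hw1, sub_zero]
      have hDu : D.mulVec u = Pi.single j 1 := by
        rw [hu, Matrix.mulVec_sub]
        have : D.mulVec w - D.mulVec w''
            = (C.mulVec v + D.mulVec w) - (C.mulVec v + D.mulVec w'') := by abel
        rw [this, h2, hw2, sub_zero]
      have := hcase u hBu (fun i hij => by rw [hDu]; simp [Pi.single_eq_of_ne hij])
      rw [hDu] at this
      simp [Pi.single_eq_same] at this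
    exact measure_mono_null hsub (Measure.addHaar_submodule ν _ hne)
end

section
/- Let μ ∈ ℝ, and suppose the linear map w ↦ (Bw, Dw) from ℝ^m to ℝ^n × ℝ^p is injective. Let q ∈ ℕ and let V (an n×q real matrix) and W (an m×q real matrix) be such that the columns of the stacked (n+m)×q matrix [V; W] form a basis of the null space of the Rosenbrock matrix P(μ). Then V has linearly independent columns (rank V = q), and the column space of V equals the subspace R⋆(μ). -/
/-- The Rosenbrock matrix `P(μ) = [[A-μI, B],[C, D]]` acting as a linear map
`(v,w) ↦ ((A-μI)v + Bw, Cv + Dw)`. -/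
def rosenbrockMap {n m p : ℕ} (A : Matrix (Fin n) (Fin n) ℝ) (B : Matrix (Fin n) (Fin m) ℝ)
    (C : Matrix (Fin p) (Fin n) ℝ) (D : Matrix (Fin p) (Fin m) ℝ) (μ : ℝ) :
    ((Fin n → ℝ) × (Fin m → ℝ)) →ₗ[ℝ] ((Fin n → ℝ) × (Fin p → ℝ)) :=
  LinearMap.prod
    (((A - μ • 1).mulVecLin).comp (LinearMap.fst ℝ (Fin n → ℝ) (Fin m → ℝ)) +
      (B.mulVecLin).comp (LinearMap.snd ℝ (Fin n → ℝ) (Fin m → ℝ)))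
    ((C.mulVecLin).comp (LinearMap.fst ℝ (Fin n → ℝ) (Fin m → ℝ)) +
      (D.mulVecLin).comp (LinearMap.snd ℝ (Fin n → ℝ) (Fin m → ℝ)))

/-!
A kernel vector `(v, w)` of `P(μ)` with `v = 0` satisfies `Bw = 0` and `Dw = 0`, so `w = 0` by
injectivity of `[B; D]`. Hence the projection `(v, w) ↦ v` is injective on `ker P(μ)`: it maps a
basis of `ker P(μ)` to a basis of its image, and that image is `R⋆(μ)` by definition.
-/

section Rosenbrock

variable {n m p : ℕ} (A : Matrix (Fin n) (Fin n) ℝ) (B : Matrix (Fin n) (Fin m) ℝ)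
  (C : Matrix (Fin p) (Fin n) ℝ) (D : Matrix (Fin p) (Fin m) ℝ) (μ : ℝ)

theorem mem_ker_rosenbrockMap_iff (v : Fin n → ℝ) (w : Fin m → ℝ) :
    (v, w) ∈ LinearMap.ker (rosenbrockMap A B C D μ) ↔
      (A - μ • 1).mulVec v + B.mulVec w = 0 ∧ C.mulVec v + D.mulVec w = 0 := by
  simp only [LinearMap.mem_ker, rosenbrockMap, LinearMap.prod_apply, Function.prod,
    LinearMap.add_apply, LinearMap.comp_apply, LinearMap.fst_apply, LinearMap.snd_apply,
    Matrix.mulVecLin_apply, Prod.mk_eq_zero]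

theorem disjoint_ker_rosenbrockMap_ker_fst
    (hinj : Function.Injective fun w : Fin m → ℝ => (B.mulVec w, D.mulVec w)) :
    Disjoint (LinearMap.ker (rosenbrockMap A B C D μ))
      (LinearMap.ker (LinearMap.fst ℝ (Fin n → ℝ) (Fin m → ℝ))) := by
  rw [Submodule.disjoint_def]
  rintro ⟨v, w⟩ hker (hv : v = 0)
  subst hv
  obtain ⟨hB, hD⟩ := (mem_ker_rosenbrockMap_iff A B C D μ 0 w).mp hker
  rw [Matrix.mulVec_zero, zero_add] at hB hD
  have hw : w = 0 := hinj (by simp only [hB, hD, Matrix.mulVec_zero])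
  rw [hw, Prod.mk_zero_zero]

theorem map_fst_ker_rosenbrockMap :
    ((LinearMap.ker (rosenbrockMap A B C D μ)).map (LinearMap.fst ℝ (Fin n → ℝ) (Fin m → ℝ)) :
      Set (Fin n → ℝ)) = RstarSet A B C D μ := by
  ext v
  constructor
  · rintro ⟨⟨v', w⟩, hker, rfl⟩
    exact ⟨w, (mem_ker_rosenbrockMap_iff A B C D μ v' w).mp hker⟩
  · rintro ⟨w, hvw⟩
    exact ⟨(v, w), (mem_ker_rosenbrockMap_iff A B C D μ v w).mpr hvw, rfl⟩

end Rosenbrock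

theorem upper_block_of_kernel_basis_is_basis_of_Rstar_general
    (n m p q : ℕ)
    (A : Matrix (Fin n) (Fin n) ℝ) (B : Matrix (Fin n) (Fin m) ℝ)
    (C : Matrix (Fin p) (Fin n) ℝ) (D : Matrix (Fin p) (Fin m) ℝ) (μ : ℝ)
    (hinj : Function.Injective fun w : Fin m → ℝ => (B.mulVec w, D.mulVec w))
    (V : Matrix (Fin n) (Fin q) ℝ) (W : Matrix (Fin m) (Fin q) ℝ)
    (hli : LinearIndependent ℝ
      (fun c : Fin q => ((fun i => V i c, fun i => W i c) : (Fin n → ℝ) × (Fin m → ℝ))))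
    (hspan : Submodule.span ℝ (Set.range
        (fun c : Fin q => ((fun i => V i c, fun i => W i c) : (Fin n → ℝ) × (Fin m → ℝ)))) =
      LinearMap.ker (rosenbrockMap A B C D μ)) :
    LinearIndependent ℝ (fun c : Fin q => (fun i => V i c : Fin n → ℝ)) ∧
      (Submodule.span ℝ (Set.range (fun c : Fin q => (fun i => V i c : Fin n → ℝ))) :
        Set (Fin n → ℝ)) = RstarSet A B C D μ := by
  set fst := LinearMap.fst ℝ (Fin n → ℝ) (Fin m → ℝ)
  set cols := fun c : Fin q => ((fun i => V i c, fun i => W i c) : (Fin n → ℝ) × (Fin m → ℝ))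
  have hupper : (fun c : Fin q => (fun i => V i c : Fin n → ℝ)) = fst ∘ cols := rfl
  rw [hupper]
  refine ⟨hli.map ?_, ?_⟩
  · rw [hspan]
    exact disjoint_ker_rosenbrockMap_ker_fst A B C D μ hinj
  · rw [Set.range_comp, ← Submodule.map_span, hspan]
    exact map_fst_ker_rosenbrockMap A B C D μ

/-- Corollary 1 (proof content): if the columns of the stacked matrix `[V; W]` form a basis of
the null space of the Rosenbrock matrix `P(μ)` and `[B; D]` has full column rank, then `V` has
linearly independent columns and the column space of `V` is exactly `R⋆(μ)`. -/
theorem upper_block_of_kernel_basis_is_basis_of_Rstar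
    (n m p q : ℕ) (hn : 0 < n) (hm : 0 < m) (hp : 0 < p)
    (A : Matrix (Fin n) (Fin n) ℝ) (B : Matrix (Fin n) (Fin m) ℝ)
    (C : Matrix (Fin p) (Fin n) ℝ) (D : Matrix (Fin p) (Fin m) ℝ) (μ : ℝ)
    (hinj : Function.Injective fun w : Fin m → ℝ => (B.mulVec w, D.mulVec w))
    (V : Matrix (Fin n) (Fin q) ℝ) (W : Matrix (Fin m) (Fin q) ℝ)
    (hli : LinearIndependent ℝ
      (fun c : Fin q => ((fun i => V i c, fun i => W i c) : (Fin n → ℝ) × (Fin m → ℝ))))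
    (hspan : Submodule.span ℝ (Set.range
        (fun c : Fin q => ((fun i => V i c, fun i => W i c) : (Fin n → ℝ) × (Fin m → ℝ)))) =
      LinearMap.ker (rosenbrockMap A B C D μ)) :
    LinearIndependent ℝ (fun c : Fin q => (fun i => V i c : Fin n → ℝ)) ∧
      (Submodule.span ℝ (Set.range (fun c : Fin q => (fun i => V i c : Fin n → ℝ))) :
        Set (Fin n → ℝ)) = RstarSet A B C D μ :=
  upper_block_of_kernel_basis_is_basis_of_Rstar_general n m p q A B C D μ hinj V W hli hspan
end

section
/- Suppose condition (★) fails, i.e., there exists a subset S ⊆ {1,…,k} with dim(W + Σ_{j∈S} M_j) < h + card(S). Then for EVERY tuple (v_1,…,v_k) with v_j ∈ M_j for each j, one has dim(W + span{v_1,…,v_k}) < h + k. -/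
/-- Appendix-A Lemma, statement (2): if condition (★) fails, then every tuple
`(v_1,…,v_k)` with `v_j ∈ M_j` satisfies `dim(W + span{v_1,…,v_k}) < h + k`. -/
theorem dim_lt_of_star_fails
    (n k : ℕ) (hk : 1 ≤ k) (W : Submodule ℝ (Fin n → ℝ))
    (M : Fin k → Submodule ℝ (Fin n → ℝ)) (hM : ∀ j, M j ≠ ⊥)
    (hfail : ∃ S : Finset (Fin k),
      Module.finrank ℝ ↥(W ⊔ ⨆ j ∈ S, M j) < Module.finrank ℝ ↥W + S.card)
    (v : Fin k → (Fin n → ℝ)) (hv : ∀ j, v j ∈ M j) :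
    Module.finrank ℝ ↥(W ⊔ Submodule.span ℝ (Set.range v)) < Module.finrank ℝ ↥W + k := by
  obtain ⟨S, hS⟩ := hfail
  -- split range v into S part and complement part
  have hrange : Set.range v = v '' ↑S ∪ v '' ↑Sᶜ := by
    rw [← Set.image_union, ← Finset.coe_union, Finset.union_compl, Finset.coe_univ,
      Set.image_univ]
  have hspan : Submodule.span ℝ (Set.range v)
      = Submodule.span ℝ (v '' ↑S) ⊔ Submodule.span ℝ (v '' ↑Sᶜ) := by
    rw [hrange, Submodule.span_union]
  have hle1 : Submodule.span ℝ (v '' ↑S) ≤ ⨆ j ∈ S, M j := by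
    rw [Submodule.span_le]
    rintro _ ⟨j, hj, rfl⟩
    exact Submodule.mem_iSup_of_mem j (Submodule.mem_iSup_of_mem hj (hv j))
  have h1 : Module.finrank ℝ ↥(W ⊔ Submodule.span ℝ (v '' ↑S))
      ≤ Module.finrank ℝ ↥(W ⊔ ⨆ j ∈ S, M j) :=
    Submodule.finrank_mono (sup_le_sup_left hle1 W)
  have h2 : Module.finrank ℝ ↥(Submodule.span ℝ (v '' ↑Sᶜ)) ≤ Sᶜ.card := by
    rw [← Finset.coe_image]
    exact (finrank_span_finset_le_card _).trans (Finset.card_image_le)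
  calc Module.finrank ℝ ↥(W ⊔ Submodule.span ℝ (Set.range v))
      = Module.finrank ℝ ↥((W ⊔ Submodule.span ℝ (v '' ↑S)) ⊔ Submodule.span ℝ (v '' ↑Sᶜ)) := by
        rw [hspan, sup_assoc]
    _ ≤ Module.finrank ℝ ↥(W ⊔ Submodule.span ℝ (v '' ↑S))
        + Module.finrank ℝ ↥(Submodule.span ℝ (v '' ↑Sᶜ)) :=
        Submodule.finrank_add_le_finrank_add_finrank _ _
    _ ≤ Module.finrank ℝ ↥(W ⊔ ⨆ j ∈ S, M j) + Sᶜ.card := add_le_add h1 h2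
    _ < Module.finrank ℝ ↥W + S.card + Sᶜ.card := by omega
    _ = Module.finrank ℝ ↥W + k := by
        rw [add_assoc, Finset.card_add_card_compl, Fintype.card_fin]
end

section
/- Suppose condition (★) holds. Then the set K := {(v_1,…,v_k) ∈ M_1 × ⋯ × M_k : dim(W + span{v_1,…,v_k}) < h + k} is a null set with respect to the product of additive Haar measures on M_1 × ⋯ × M_k. -/
/-!
Induction on `k`, choosing the vectors one at a time. By Fubini it suffices that for almost every
`x ∈ M₀` the slice at `x` is null. A Haar-generic `x` lies in none of the finitely many subspaces
`W ⊔ ⨆ j ∈ S, M j` (`S ⊆ {1, …, k-1}`) that do not contain `M₀`. For such `x`, (★) for `W` and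
`M₀, …, M_{k-1}` implies (★) for `W ⊔ ℝx` and `M₁, …, M_{k-1}`: if `M₀ ⊆ W ⊔ ⨆ j ∈ S, M j`, then
(★) for `S ∪ {0}` already gives the extra dimension, and otherwise `x` adds it. The slice at `x`
is exactly the set of degenerate tuples for `W ⊔ ℝx`, which is null by induction.
-/

open MeasureTheory Module Submodule Set

section LinearAlgebra

variable {K V : Type*} [Field K] [AddCommGroup V] [Module K V] {ι κ : Type*}

/-- Rado's condition for `(M j)` to admit an independent transversal over `W`; this is the
paper's condition (★). -/
def RadoCondition (W : Submodule K V) (M : ι → Submodule K V) : Prop :=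
  ∀ S : Finset ι, finrank K W + S.card ≤ finrank K ↥(W ⊔ ⨆ j ∈ S, M j)

def degenerateTuples [Fintype ι] (W : Submodule K V) (M : ι → Submodule K V) :
    Set (∀ j, M j) :=
  {v | finrank K ↥(W ⊔ span K (range fun j => (v j : V))) < finrank K W + Fintype.card ι}

namespace RadoCondition

variable {W : Submodule K V} {M : ι → Submodule K V}

theorem comp_injective (h : RadoCondition W M) {e : κ → ι} (he : Function.Injective e) :
    RadoCondition W (fun j => M (e j)) := by
  classical
  intro S
  have := h (S.image e)
  rwa [Finset.iSup_finset_image, Finset.card_image_of_injective S he] at this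

theorem finrank_lt_of_le [DecidableEq ι] (h : RadoCondition W M) {S : Finset ι} {i : ι}
    (hi : i ∉ S) (hle : M i ≤ W ⊔ ⨆ j ∈ S, M j) :
    finrank K W + S.card < finrank K ↥(W ⊔ ⨆ j ∈ S, M j) := by
  have := h (insert i S)
  rwa [Finset.card_insert_of_notMem hi, Finset.iSup_insert, sup_left_comm,
    sup_eq_right.2 hle] at this

theorem not_le (h : RadoCondition W M) (i : ι) : ¬ M i ≤ W := fun hle => by
  have := h {i}
  rw [Finset.card_singleton, Finset.iSup_singleton, sup_eq_left.2 hle] at this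
  omega

theorem sup_span_singleton [FiniteDimensional K V] (h : RadoCondition W M) {i : ι}
    {e : κ → ι} (he : Function.Injective e) (hi : ∀ j, e j ≠ i) {x : V}
    (hx : ∀ S : Finset κ,
      ¬ M i ≤ W ⊔ ⨆ j ∈ S, M (e j) → x ∉ W ⊔ ⨆ j ∈ S, M (e j)) :
    RadoCondition (W ⊔ span K {x}) (fun j => M (e j)) := by
  classical
  intro S
  have hS : finrank K W + S.card ≤ finrank K ↥(W ⊔ ⨆ j ∈ S, M (e j)) :=
    h.comp_injective he S
  have hlt : M i ≤ W ⊔ ⨆ j ∈ S, M (e j) →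
      finrank K W + S.card < finrank K ↥(W ⊔ ⨆ j ∈ S, M (e j)) := fun hle => by
    have := h.finrank_lt_of_le (S := S.image e) (i := i) (by simp [hi])
      (by rwa [Finset.iSup_finset_image])
    rwa [Finset.iSup_finset_image, Finset.card_image_of_injective S he] at this
  have hxS := hx S
  rw [sup_right_comm W]
  generalize W ⊔ ⨆ j ∈ S, M (e j) = U at hS hlt hxS ⊢
  have hx1 : finrank K (span K {x}) ≤ 1 := by simpa using finrank_span_le_card ({x} : Set V)
  have hWx := finrank_add_le_finrank_add_finrank W (span K {x})
  by_cases hle : M i ≤ U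
  · have hUx := Submodule.finrank_mono (le_sup_left : U ≤ U ⊔ span K {x})
    have := hlt hle
    omega
  · rw [finrank_sup_span_singleton (hxS hle)]
    omega

end RadoCondition

theorem finrank_sup_span_range_lt_iff [FiniteDimensional K V] [Fintype ι] (W : Submodule K V)
    (v : ι → V) :
    finrank K ↥(W ⊔ span K (range v)) < finrank K W + Fintype.card ι ↔
      ¬ LinearIndependent K (Sum.elim (fun a => (finBasis K W a : V)) v) := by
  have hspan : span K (range (Sum.elim (fun a => (finBasis K W a : V)) v)) =
      W ⊔ span K (range v) := by
    have hW : span K (range (W.subtype ∘ finBasis K W)) = W := by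
      rw [range_comp, ← map_span, (finBasis K W).span_eq, map_subtype_top]
    rw [Set.Sum.elim_range, span_union]
    exact congrArg (· ⊔ _) hW
  rw [linearIndependent_iff_card_le_finrank_span, Fintype.card_sum, Fintype.card_fin,
    Set.finrank, hspan, not_le]

theorem range_coe_insertNth {k : ℕ} {M : Fin (k + 1) → Submodule K V} (i : Fin (k + 1))
    (x : M i) (w : ∀ j, M (i.succAbove j)) :
    range (fun j => (Fin.insertNth (α := fun j => M j) i x w j : V)) =
      insert (x : V) (range fun j => (w j : V)) := by
  ext y
  simp [Fin.exists_iff_succAbove i, eq_comm]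

theorem insertNth_preimage_degenerateTuples [FiniteDimensional K V] {k : ℕ} {W : Submodule K V}
    {M : Fin (k + 1) → Submodule K V} {i : Fin (k + 1)} {x : M i} (hx : (x : V) ∉ W) :
    i.insertNth x ⁻¹' degenerateTuples W M =
      degenerateTuples (W ⊔ span K {(x : V)}) (fun j => M (i.succAbove j)) := by
  ext w
  simp only [mem_preimage, degenerateTuples, mem_ofPred_eq]
  rw [range_coe_insertNth, span_insert, ← sup_assoc, finrank_sup_span_singleton hx,
    Fintype.card_fin, Fintype.card_fin]
  omega

end LinearAlgebra

theorem MeasureTheory.Measure.pi_eq_zero_of_ae_insertNth {k : ℕ} {α : Fin (k + 1) → Type*}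
    [∀ j, MeasurableSpace (α j)] (μ : ∀ j, Measure (α j)) [∀ j, SigmaFinite (μ j)]
    (i : Fin (k + 1)) {s : Set (∀ j, α j)} (hs : MeasurableSet s)
    (h : ∀ᵐ x ∂μ i, Measure.pi (fun j => μ (i.succAbove j)) (i.insertNth x ⁻¹' s) = 0) :
    Measure.pi μ s = 0 := by
  have he := (measurePreserving_piFinSuccAbove μ i).symm
  rw [← he.measure_preimage hs.nullMeasurableSet,
    Measure.measure_prod_null (hs.preimage he.measurable)]
  exact h

section Haar

variable {E : Type*} [NormedAddCommGroup E] [NormedSpace ℝ E] [FiniteDimensional ℝ E]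
  [MeasurableSpace E] [BorelSpace E]

theorem ae_forall_coe_notMem {α : Type*} [Countable α] {M : Submodule ℝ E} (μ : Measure M)
    [μ.IsAddHaarMeasure] (U : α → Submodule ℝ E) :
    ∀ᵐ x : M ∂μ, ∀ a, ¬ M ≤ U a → (x : E) ∉ U a := by
  refine ae_all_iff.2 fun a => ?_
  by_cases hle : M ≤ U a
  · exact ae_of_all _ fun _ hn => absurd hle hn
  refine ae_iff.2 <| measure_mono_null (fun x hx => ?_)
    (Measure.addHaar_submodule μ ((U a).comap M.subtype) (by rwa [Ne, comap_subtype_eq_top]))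
  simpa using (Classical.not_imp.1 hx).2

theorem measurableSet_degenerateTuples {ι : Type*} [Fintype ι] (W : Submodule ℝ E)
    (M : ι → Submodule ℝ E) : MeasurableSet (degenerateTuples W M) := by
  have : degenerateTuples W M = (fun v j => Sum.elim (fun a => (finBasis ℝ W a : E))
      (fun j => (v j : E)) j) ⁻¹' {u | LinearIndependent ℝ u}ᶜ := by
    ext v
    exact finrank_sup_span_range_lt_iff W _
  rw [this]
  refine (measurable_pi_lambda _ ?_) isOpen_setOfPred_linearIndependent.measurableSet.compl
  rintro (a | j)
  · exact measurable_const
  · exact measurable_subtype_coe.comp (measurable_pi_apply j)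

theorem measure_pi_degenerateTuples_eq_zero {k : ℕ} (W : Submodule ℝ E)
    (M : Fin k → Submodule ℝ E) (h : RadoCondition W M) (ν : ∀ j, Measure (M j))
    [∀ j, (ν j).IsAddHaarMeasure] : Measure.pi ν (degenerateTuples W M) = 0 := by
  induction k generalizing W with
  | zero =>
    convert measure_empty (μ := Measure.pi ν)
    refine eq_empty_of_forall_notMem fun v hv => ?_
    exact absurd (Submodule.finrank_mono le_sup_left) (by simpa [degenerateTuples] using hv)
  | succ k ih =>
    refine Measure.pi_eq_zero_of_ae_insertNth ν 0 (measurableSet_degenerateTuples W M) ?_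
    filter_upwards [ae_forall_coe_notMem (ν 0)
      fun S : Finset (Fin k) => W ⊔ ⨆ j ∈ S, M (Fin.succAbove 0 j)] with x hx
    have hxW : (x : E) ∉ W := by simpa using hx ∅ (by simpa using h.not_le 0)
    rw [insertNth_preimage_degenerateTuples hxW]
    exact ih _ _ (h.sup_span_singleton Fin.succAbove_right_injective (Fin.succAbove_ne 0) hx) _

end Haar

theorem bad_tuples_null_of_star_general
    (n k : ℕ) (W : Submodule ℝ (Fin n → ℝ))
    (M : Fin k → Submodule ℝ (Fin n → ℝ))
    (hstar : ∀ S : Finset (Fin k),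
      Module.finrank ℝ ↥W + S.card ≤ Module.finrank ℝ ↥(W ⊔ ⨆ j ∈ S, M j))
    (ν : (j : Fin k) → Measure ↥(M j))
    [∀ j, (ν j).IsAddHaarMeasure] :
    Measure.pi ν {v : (j : Fin k) → ↥(M j) |
      Module.finrank ℝ
          ↥(W ⊔ Submodule.span ℝ (Set.range fun j => (v j : Fin n → ℝ))) <
        Module.finrank ℝ ↥W + k} = 0 := by
  simpa only [degenerateTuples, Fintype.card_fin] using
    measure_pi_degenerateTuples_eq_zero W M hstar ν

/-- Appendix-A Lemma, statement (1): if condition (★) holds, then the set of tuples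
`(v_1,…,v_k) ∈ M_1 × ⋯ × M_k` with `dim(W + span{v_1,…,v_k}) < h + k` is null with respect
to the product of additive Haar measures on `M_1 × ⋯ × M_k`. -/
theorem bad_tuples_null_of_star
    (n k : ℕ) (hk : 1 ≤ k) (W : Submodule ℝ (Fin n → ℝ))
    (M : Fin k → Submodule ℝ (Fin n → ℝ)) (hM : ∀ j, M j ≠ ⊥)
    (hstar : ∀ S : Finset (Fin k),
      Module.finrank ℝ ↥W + S.card ≤ Module.finrank ℝ ↥(W ⊔ ⨆ j ∈ S, M j))
    (ν : (j : Fin k) → Measure ↥(M j))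
    [∀ j, (ν j).IsAddHaarMeasure] [∀ j, SigmaFinite (ν j)] :
    Measure.pi ν {v : (j : Fin k) → ↥(M j) |
      Module.finrank ℝ
          ↥(W ⊔ Submodule.span ℝ (Set.range fun j => (v j : Fin n → ℝ))) <
        Module.finrank ℝ ↥W + k} = 0 :=
  bad_tuples_null_of_star_general n k W M hstar ν
end

section
/- Suppose condition (★) holds. Then there exists a tuple (v_1,…,v_k) with v_j ∈ M_j for each j such that dim(W + span{v_1,…,v_k}) = h + k. -/
open Module Submodule

private lemma finrank_sup_span_singleton_le' {V : Type*} [AddCommGroup V] [Module ℝ V]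
    [FiniteDimensional ℝ V] (p : Submodule ℝ V) (x : V) :
    Module.finrank ℝ ↥(p ⊔ span ℝ {x}) ≤ Module.finrank ℝ p + 1 := by
  have h := Submodule.finrank_sup_add_finrank_inf_eq p (span ℝ {x})
  have h2 : finrank ℝ ↥(span ℝ {x}) ≤ 1 :=
    le_trans (finrank_span_le_card ({x} : Set V)) (by simp)
  omega

private lemma range_snoc' {V : Type*} {k : ℕ} (v : Fin k → V) (x : V) :
    Set.range (Fin.snoc v x : Fin (k + 1) → V) = insert x (Set.range v) := by
  ext y
  simp only [Set.mem_range, Set.mem_insert_iff]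
  constructor
  · rintro ⟨i, rfl⟩
    induction i using Fin.lastCases with
    | last => left; simp
    | cast i => right; exact ⟨i, by simp⟩
  · rintro (rfl | ⟨i, rfl⟩)
    · exact ⟨Fin.last k, Fin.snoc_last _ _⟩
    · exact ⟨i.castSucc, Fin.snoc_castSucc _ _ _⟩

private lemma aux_induction' {V : Type*} [AddCommGroup V] [Module ℝ V] [FiniteDimensional ℝ V] :
    ∀ (k : ℕ) (W : Submodule ℝ V) (M : Fin k → Submodule ℝ V),
    (∀ S : Finset (Fin k),
      Module.finrank ℝ ↥W + S.card ≤ Module.finrank ℝ ↥(W ⊔ ⨆ j ∈ S, M j)) →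
    ∃ v : Fin k → V, (∀ j, v j ∈ M j) ∧
      Module.finrank ℝ ↥(W ⊔ Submodule.span ℝ (Set.range v)) = Module.finrank ℝ ↥W + k := by
  intro k
  induction k with
  | zero =>
    intro W M _
    refine ⟨fun i => 0, fun j => j.elim0, ?_⟩
    rw [Set.range_eq_empty, Submodule.span_empty, sup_bot_eq, add_zero]
  | succ k IH =>
    intro W M hstar
    set Mk := M (Fin.last k) with hMk
    have claim : ∃ x ∈ Mk, ∀ S : Finset (Fin (k + 1)), Fin.last k ∉ S →
        finrank ℝ W + S.card + 1 ≤ finrank ℝ ↥((W ⊔ span ℝ {x}) ⊔ ⨆ j ∈ S, M j) := by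
      by_contra hcon
      push_neg at hcon
      set p : Finset (Fin (k + 1)) → Submodule ℝ Mk := fun S =>
        Submodule.comap Mk.subtype
          (if Fin.last k ∉ S ∧ finrank ℝ ↥(W ⊔ ⨆ j ∈ S, M j) ≤ finrank ℝ W + S.card
            then W ⊔ ⨆ j ∈ S, M j else W) with hp
      have hcover : ⋃ S, ((p S : Submodule ℝ Mk) : Set Mk) = Set.univ := by
        apply Set.eq_univ_of_forall
        intro x
        obtain ⟨S, hlast, hlt⟩ := hcon x x.2
        have hle1 : W ⊔ ⨆ j ∈ S, M j ≤ (W ⊔ span ℝ {(x : V)}) ⊔ ⨆ j ∈ S, M j :=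
          sup_le_sup_right le_sup_left _
        have htight : finrank ℝ ↥(W ⊔ ⨆ j ∈ S, M j) ≤ finrank ℝ W + S.card :=
          le_trans (Submodule.finrank_mono hle1) (by omega)
        have heq : W ⊔ ⨆ j ∈ S, M j = (W ⊔ span ℝ {(x : V)}) ⊔ ⨆ j ∈ S, M j := by
          apply Submodule.eq_of_le_of_finrank_le hle1
          exact le_trans (by omega : finrank ℝ ↥((W ⊔ span ℝ {(x:V)}) ⊔ ⨆ j ∈ S, M j)
            ≤ finrank ℝ W + S.card) (hstar S)
        have hxmem : (x : V) ∈ W ⊔ ⨆ j ∈ S, M j := by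
          rw [heq]
          exact Submodule.mem_sup_left
            (Submodule.mem_sup_right (Submodule.mem_span_singleton_self _))
        refine Set.mem_iUnion.2 ⟨S, ?_⟩
        simp only [hp, SetLike.mem_coe, Submodule.mem_comap, Submodule.coe_subtype]
        rw [if_pos ⟨hlast, htight⟩]
        exact hxmem
      obtain ⟨S, hStop⟩ := Subspace.exists_eq_top_of_iUnion_eq_univ hcover
      by_cases hcond : Fin.last k ∉ S ∧ finrank ℝ ↥(W ⊔ ⨆ j ∈ S, M j) ≤ finrank ℝ W + S.card
      · simp only [hp, if_pos hcond] at hStop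
        have hMkle : Mk ≤ W ⊔ ⨆ j ∈ S, M j := Submodule.comap_subtype_eq_top.mp hStop
        have hins := hstar (insert (Fin.last k) S)
        rw [Finset.card_insert_of_notMem hcond.1] at hins
        have hsupeq : W ⊔ ⨆ j ∈ insert (Fin.last k) S, M j = W ⊔ ⨆ j ∈ S, M j := by
          rw [Finset.iSup_insert]
          refine le_antisymm (sup_le le_sup_left (sup_le hMkle ?_)) ?_
          · exact le_sup_right
          · exact sup_le_sup_left le_sup_right _
        rw [hsupeq] at hins
        omega
      · simp only [hp, if_neg hcond] at hStop
        have hMkle : Mk ≤ W := Submodule.comap_subtype_eq_top.mp hStop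
        have h1 := hstar {Fin.last k}
        have hsupeq : W ⊔ ⨆ j ∈ ({Fin.last k} : Finset (Fin (k+1))), M j = W := by
          simp only [Finset.iSup_singleton]
          exact sup_eq_left.mpr hMkle
        rw [hsupeq] at h1
        simp at h1
    obtain ⟨x, hxMk, hx⟩ := claim
    set W' := W ⊔ span ℝ {x} with hW'
    have hW'rank : finrank ℝ W' = finrank ℝ W + 1 := by
      have h1 := hx ∅ (Finset.notMem_empty _)
      simp only [Finset.card_empty, add_zero] at h1
      have h2 : W' ⊔ ⨆ j ∈ (∅ : Finset (Fin (k+1))), M j = W' := by simp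
      rw [h2] at h1
      exact le_antisymm (finrank_sup_span_singleton_le' W x) h1
    have hIH := IH W' (fun j => M j.castSucc) ?_
    · obtain ⟨v', hv'mem, hv'rank⟩ := hIH
      refine ⟨Fin.snoc v' x, ?_, ?_⟩
      · intro j
        induction j using Fin.lastCases with
        | last => simpa using hxMk
        | cast i => simpa using hv'mem i
      · rw [range_snoc', Submodule.span_insert, ← sup_assoc, ← hW', hv'rank, hW'rank]
        omega
    · intro S
      have hnotmem : Fin.last k ∉ S.map Fin.castSuccEmb := by
        intro hmem
        obtain ⟨i, _, hie⟩ := Finset.mem_map.mp hmem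
        exact (Fin.castSucc_lt_last i).ne (by simpa using hie)
      have h1 := hx (S.map Fin.castSuccEmb) hnotmem
      have hcard : (S.map Fin.castSuccEmb).card = S.card := Finset.card_map _
      have hsup : (⨆ j ∈ S.map Fin.castSuccEmb, M j) = ⨆ j ∈ S, M j.castSucc := by
        rw [← Finset.sup_eq_iSup, ← Finset.sup_eq_iSup, Finset.sup_map]
        rfl
      rw [hcard, hsup] at h1
      rw [hW'rank]
      beta_reduce
      omega



/-- If condition (★) holds, there exists a tuple `(v_1,…,v_k)` with `v_j ∈ M_j` such that
`dim(W + span{v_1,…,v_k}) = h + k`. -/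
theorem exists_tuple_full_dim_of_star
    (n k : ℕ) (hk : 1 ≤ k) (W : Submodule ℝ (Fin n → ℝ))
    (M : Fin k → Submodule ℝ (Fin n → ℝ)) (hM : ∀ j, M j ≠ ⊥)
    (hstar : ∀ S : Finset (Fin k),
      Module.finrank ℝ ↥W + S.card ≤ Module.finrank ℝ ↥(W ⊔ ⨆ j ∈ S, M j)) :
    ∃ v : Fin k → (Fin n → ℝ), (∀ j, v j ∈ M j) ∧
      Module.finrank ℝ ↥(W ⊔ Submodule.span ℝ (Set.range v)) =
        Module.finrank ℝ ↥W + k := by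
  obtain ⟨v, hv, hr⟩ := aux_induction' k W M hstar
  exact ⟨v, hv, hr⟩
end

section
/- Let G be a further subspace of X and define K^c := {v ∈ M_1 × ⋯ × M_k : dim Q(v) = h + k}. If there exists a tuple v* ∈ K^c with G ⊄ Q(v*), then the set {v ∈ K^c : G ⊆ Q(v)} is a null set with respect to the product of additive Haar measures on M_1 × ⋯ × M_k. -/
/-!
Pick `g ∈ G` outside `Q(v*)` and pass to `X ⧸ W`. There `G ⊆ Q(v)` puts `ḡ` in the span of
`v̄₁, …, v̄ₖ`, whereas `ḡ, v̄*₁, …, v̄*ₖ` are linearly independent because `dim Q(v*) = h + k`.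
So for an alternating `(k+1)`-form `A` on `X ⧸ W` with `A (ḡ, v̄*) ≠ 0`, the map
`v ↦ A (ḡ, v̄₁, …, v̄ₖ)` is a nonzero multilinear map on `M₁ × ⋯ × Mₖ` vanishing on the set.
Zero sets of nonzero multilinear maps are Haar-null by Fubini: for `x` off the kernel of
`x ↦ f (x, ·)`, a proper subspace and hence null, the slice is the zero set of a nonzero
multilinear map in one variable fewer.
-/

open MeasureTheory Submodule Module

theorem LinearIndependent.exists_alternatingMap_ne_zero {K V ι : Type*} [Field K]
    [AddCommGroup V] [Module K V] [Fintype ι] [DecidableEq ι] {u : ι → V}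
    (hu : LinearIndependent K u) : ∃ A : V [⋀^ι]→ₗ[K] K, A u ≠ 0 := by
  obtain ⟨π, hπ⟩ := (span K (Set.range u)).subtype.exists_leftInverse_of_injective
    (ker_subtype _)
  refine ⟨(Basis.span hu).det.compLinearMap π, ?_⟩
  have hπu : (fun i => π (u i)) = Basis.span hu := funext fun i => by
    simpa [Basis.span_apply] using LinearMap.congr_fun hπ (Basis.span hu i)
  rw [AlternatingMap.compLinearMap_apply, hπu, Basis.det_self]
  exact one_ne_zero

theorem Submodule.mkQ_mem_span_range_iff {R M ι : Type*} [Ring R] [AddCommGroup M] [Module R M]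
    (W : Submodule R M) (v : ι → M) (x : M) :
    W.mkQ x ∈ span R (Set.range (W.mkQ ∘ v)) ↔ x ∈ W ⊔ span R (Set.range v) := by
  rw [Set.range_comp, ← map_span, ← mem_comap, comap_map_mkQ]

theorem Submodule.linearIndependent_mkQ_of_finrank_sup_eq {K V ι : Type*} [Field K]
    [AddCommGroup V] [Module K V] [FiniteDimensional K V] [Fintype ι]
    (W : Submodule K V) {v : ι → V}
    (h : finrank K ↥(W ⊔ span K (Set.range v)) = finrank K W + Fintype.card ι) :
    LinearIndependent K (W.mkQ ∘ v) := by
  have hsup := finrank_sup_add_finrank_inf_eq W (span K (Set.range v))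
  have hle : finrank K (span K (Set.range v)) ≤ Fintype.card ι := finrank_range_le_card v
  have hv : LinearIndependent K v := linearIndependent_iff_card_eq_finrank_span.mpr (by
    rw [Set.finrank]; omega)
  refine hv.map ?_
  rw [ker_mkQ, disjoint_comm, disjoint_iff, ← finrank_eq_zero]
  omega

theorem MultilinearMap.continuous_of_finiteDimensional {ι : Type*} [Fintype ι] [DecidableEq ι]
    {𝕜 : Type*} [NontriviallyNormedField 𝕜] [CompleteSpace 𝕜]
    {E : ι → Type*} [∀ i, NormedAddCommGroup (E i)] [∀ i, NormedSpace 𝕜 (E i)]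
    [∀ i, FiniteDimensional 𝕜 (E i)] {F : Type*} [NormedAddCommGroup F] [NormedSpace 𝕜 F]
    (f : MultilinearMap 𝕜 E F) : Continuous f := by
  let b i := Module.finBasis 𝕜 (E i)
  have hf : ⇑f = fun v => ∑ r : ∀ i, Fin (Module.finrank 𝕜 (E i)),
      (∏ i, (b i).repr (v i) (r i)) • f fun i => b i (r i) := by
    ext v
    conv_lhs => rw [← funext fun i => (b i).sum_repr (v i)]
    simp only [f.map_sum, f.map_smul_univ]
  rw [hf]
  have hcoord : ∀ i j, Continuous fun x : E i => (b i).repr x j := fun i j =>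
    ((b i).coord j).continuous_of_finiteDimensional
  fun_prop

theorem MultilinearMap.measure_pi_setOf_eq_zero_eq_zero {k : ℕ} {E : Fin k → Type*}
    [∀ j, NormedAddCommGroup (E j)] [∀ j, NormedSpace ℝ (E j)] [∀ j, MeasurableSpace (E j)]
    [∀ j, BorelSpace (E j)] [∀ j, FiniteDimensional ℝ (E j)] {F : Type*}
    [NormedAddCommGroup F] [NormedSpace ℝ F] (μ : ∀ j, Measure (E j))
    [∀ j, (μ j).IsAddHaarMeasure] {f : MultilinearMap ℝ E F} (hf : f ≠ 0) :
    Measure.pi μ {v | f v = 0} = 0 := by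
  induction k with
  | zero =>
    convert measure_empty (μ := Measure.pi μ)
    refine Set.eq_empty_of_forall_notMem fun v hv => hf (MultilinearMap.ext fun w => ?_)
    rw [Subsingleton.elim w v]
    exact hv
  | succ k ih =>
    have hS : MeasurableSet {v | f v = 0} :=
      (isClosed_eq f.continuous_of_finiteDimensional continuous_const).measurableSet
    rw [← (measurePreserving_piFinSuccAbove μ 0).symm.measure_preimage_equiv,
      Measure.measure_prod_null (hS.preimage (MeasurableEquiv.measurable _))]
    have hker : LinearMap.ker (f.curryMid 0) ≠ ⊤ := by
      rw [Ne, LinearMap.ker_eq_top]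
      exact fun h => hf ((curryMidLinearEquiv ℝ E F 0).map_eq_zero_iff.mp h)
    filter_upwards [measure_eq_zero_iff_ae_notMem.mp (Measure.addHaar_submodule (μ 0) _ hker)]
      with x hx
    have hslice : Prod.mk x ⁻¹' ((MeasurableEquiv.piFinSuccAbove E 0).symm ⁻¹' {v | f v = 0}) =
        {y | f.curryMid 0 x y = 0} := rfl
    rw [hslice]
    exact ih (fun j => μ (Fin.succAbove 0 j)) hx

theorem containing_tuples_null_general
    (n k : ℕ) (W G : Submodule ℝ (Fin n → ℝ))
    (M : Fin k → Submodule ℝ (Fin n → ℝ))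
    (ν : (j : Fin k) → Measure ↥(M j))
    [∀ j, (ν j).IsAddHaarMeasure]
    (hex : ∃ v : (j : Fin k) → ↥(M j),
      Module.finrank ℝ
          ↥(W ⊔ Submodule.span ℝ (Set.range fun j => (v j : Fin n → ℝ))) =
        Module.finrank ℝ ↥W + k ∧
      ¬ G ≤ W ⊔ Submodule.span ℝ (Set.range fun j => (v j : Fin n → ℝ))) :
    Measure.pi ν {v : (j : Fin k) → ↥(M j) |
      Module.finrank ℝ
          ↥(W ⊔ Submodule.span ℝ (Set.range fun j => (v j : Fin n → ℝ))) =
        Module.finrank ℝ ↥W + k ∧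
      G ≤ W ⊔ Submodule.span ℝ (Set.range fun j => (v j : Fin n → ℝ))} = 0 := by
  obtain ⟨v₀, hrank, hG⟩ := hex
  obtain ⟨g, hgG, hgQ⟩ := SetLike.not_le_iff_exists.mp hG
  have hli : LinearIndependent ℝ
      (Fin.cons (W.mkQ g) (W.mkQ ∘ fun j => (v₀ j : Fin n → ℝ)) : Fin (k + 1) → _) :=
    linearIndependent_finCons.mpr
      ⟨W.linearIndependent_mkQ_of_finrank_sup_eq (by simpa using hrank),
        (W.mkQ_mem_span_range_iff _ _).not.mpr hgQ⟩
  obtain ⟨A, hA⟩ := hli.exists_alternatingMap_ne_zero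
  let F := (A.toMultilinearMap.curryLeft (W.mkQ g)).compLinearMap
    fun j => W.mkQ ∘ₗ (M j).subtype
  have hF (v : (j : Fin k) → ↥(M j)) :
      F v = A (Fin.cons (W.mkQ g) (W.mkQ ∘ fun j => (v j : Fin n → ℝ))) := rfl
  refine measure_mono_null (fun v hv => ?_)
    (F.measure_pi_setOf_eq_zero_eq_zero ν fun h => hA (by simpa [hF] using congr(($h) v₀)))
  exact A.map_linearDependent _ fun hli => (linearIndependent_finCons.mp hli).2
    ((W.mkQ_mem_span_range_iff _ _).mpr (hv.2 hgG))

/-- Proposition fact:Lor2: if some tuple in `K^c` has `G ⊄ Q(v)`, then the tuples in `K^c`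
with `G ⊆ Q(v)` form a null set with respect to the product of additive Haar measures on
`M_1 × ⋯ × M_k`. -/
theorem containing_tuples_null
    (n k : ℕ) (hk : 1 ≤ k) (W G : Submodule ℝ (Fin n → ℝ))
    (M : Fin k → Submodule ℝ (Fin n → ℝ)) (hM : ∀ j, M j ≠ ⊥)
    (ν : (j : Fin k) → Measure ↥(M j))
    [∀ j, (ν j).IsAddHaarMeasure] [∀ j, SigmaFinite (ν j)]
    (hex : ∃ v : (j : Fin k) → ↥(M j),
      Module.finrank ℝ
          ↥(W ⊔ Submodule.span ℝ (Set.range fun j => (v j : Fin n → ℝ))) =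
        Module.finrank ℝ ↥W + k ∧
      ¬ G ≤ W ⊔ Submodule.span ℝ (Set.range fun j => (v j : Fin n → ℝ))) :
    Measure.pi ν {v : (j : Fin k) → ↥(M j) |
      Module.finrank ℝ
          ↥(W ⊔ Submodule.span ℝ (Set.range fun j => (v j : Fin n → ℝ))) =
        Module.finrank ℝ ↥W + k ∧
      G ≤ W ⊔ Submodule.span ℝ (Set.range fun j => (v j : Fin n → ℝ))} = 0 :=
  containing_tuples_null_general n k W G M ν hex
end

section
/- Define K^c := {v ∈ M_1 × ⋯ × M_k : dim Q(v) = h + k} and assume K^c is nonempty. Let A := ⋂_{v ∈ K^c} Q(v), γ := {j ∈ {1,…,k} : M_j ⊆ A} and l := card(γ). If in addition dim(W + Σ_{j∈γ} M_j) ≥ h + l, then A = W + Σ_{j∈γ} M_j and dim A = h + l. -/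
open Matrix Polynomial Submodule Set Module Function

namespace InterSupAux

variable {n : ℕ}

/-- Gram matrix of a finite family of vectors in `ℝ^n` w.r.t. dot product. -/
noncomputable def gram {ι : Type*} [Fintype ι] (f : ι → (Fin n → ℝ)) : Matrix ι ι ℝ :=
  Matrix.of fun i j => f i ⬝ᵥ f j

lemma gram_mulVec {ι : Type*} [Fintype ι] (f : ι → (Fin n → ℝ)) (c : ι → ℝ) :
    (gram f) *ᵥ c = fun i => f i ⬝ᵥ (∑ j, c j • f j) := by
  funext i
  simp only [gram, mulVec, dotProduct, Matrix.of_apply, Finset.sum_apply, Pi.smul_apply,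
    smul_eq_mul, Finset.mul_sum, Finset.sum_mul]
  rw [Finset.sum_comm]
  apply Finset.sum_congr rfl
  intro j _
  apply Finset.sum_congr rfl
  intro p _
  ring

lemma gram_det_ne_zero_iff {ι : Type*} [Fintype ι] [DecidableEq ι] (f : ι → (Fin n → ℝ)) :
    (gram f).det ≠ 0 ↔ LinearIndependent ℝ f := by
  rw [Ne, ← Matrix.exists_mulVec_eq_zero_iff]
  constructor
  · intro h
    rw [Fintype.linearIndependent_iff]
    intro c hc i
    by_contra hci
    refine h ⟨c, fun h0 => hci (by rw [h0]; rfl), ?_⟩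
    rw [gram_mulVec, hc]
    funext i'
    simp [dotProduct]
  · intro hf
    rintro ⟨c, hc0, hc⟩
    rw [Fintype.linearIndependent_iff] at hf
    apply hc0
    have hz : (∑ j, c j • f j) ⬝ᵥ (∑ j, c j • f j) = 0 := by
      have h1 : c ⬝ᵥ ((gram f) *ᵥ c) = 0 := by rw [hc]; simp
      rw [gram_mulVec] at h1
      rw [← h1]
      simp only [dotProduct, Finset.sum_apply, Pi.smul_apply, smul_eq_mul,
        Finset.sum_mul, Finset.mul_sum]
      rw [Finset.sum_comm]
      apply Finset.sum_congr rfl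
      intro i _
      apply Finset.sum_congr rfl
      intro p _
      apply Finset.sum_congr rfl
      intro j _
      ring
    have hz' : (∑ j, c j • f j) = 0 := dotProduct_self_eq_zero.mp hz
    funext i
    exact hf c hz' i

/-- If `f` is independent and `m ∉ span f`, any relation `∑ d i • f i + a • m = 0` is trivial. -/
lemma relation_aux {ι : Type*} [Fintype ι] {f : ι → (Fin n → ℝ)}
    (hf : LinearIndependent ℝ f) {m : Fin n → ℝ} (hm : m ∉ span ℝ (range f))
    {d : ι → ℝ} {a : ℝ} (h : ∑ i, d i • f i + a • m = 0) : a = 0 ∧ ∀ i, d i = 0 := by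
  have ha : a = 0 := by
    by_contra ha
    apply hm
    have h2 : a • m = -(∑ i, d i • f i) := eq_neg_of_add_eq_zero_right h
    have h3 : m = a⁻¹ • -(∑ i, d i • f i) := by
      rw [← h2, smul_smul, inv_mul_cancel₀ ha, one_smul]
    rw [h3]
    exact Submodule.smul_mem _ _ (Submodule.neg_mem _ (Submodule.sum_mem _ fun i _ =>
      Submodule.smul_mem _ _ (Submodule.subset_span (mem_range_self i))))
  refine ⟨ha, ?_⟩
  rw [ha, zero_smul, add_zero] at h
  exact Fintype.linearIndependent_iff.mp hf d h

lemma sum_update_add {ι : Type*} [Fintype ι] [DecidableEq ι] (f : ι → (Fin n → ℝ)) (s : ι)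
    (w : Fin n → ℝ) (g : ι → ℝ) :
    ∑ i, g i • Function.update f s (f s + w) i = ∑ i, g i • f i + g s • w := by
  rw [Finset.sum_congr rfl (g := fun i =>
      g i • f i + (if i = s then g s • w else 0)) ?_]
  · rw [Finset.sum_add_distrib, Finset.sum_ite_eq' Finset.univ s (fun _ => g s • w)]
    simp
  · intro i _
    by_cases hi : i = s
    · subst hi; simp [Function.update_self, smul_add]
    · simp [Function.update_of_ne hi, hi]

/-- Updating a member of an independent family by adding a vector outside the span keeps
independence. -/
lemma indep_update_add {ι : Type*} [Fintype ι] [DecidableEq ι] {f : ι → (Fin n → ℝ)}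
    (hf : LinearIndependent ℝ f) {m : Fin n → ℝ} (hm : m ∉ span ℝ (range f)) (s : ι) :
    LinearIndependent ℝ (Function.update f s (f s + m)) := by
  rw [Fintype.linearIndependent_iff]
  intro g hg
  rw [sum_update_add] at hg
  obtain ⟨ha, hd⟩ := relation_aux hf hm hg
  exact hd

lemma mem_span_extend {ι : Type*} [Fintype ι] [DecidableEq ι] {f : ι → (Fin n → ℝ)}
    (hf : LinearIndependent ℝ f) (m : Fin n → ℝ) :
    m ∈ span ℝ (range f) ↔ ¬ LinearIndependent ℝ (Sum.elim f (fun _ : Unit => m)) := by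
  constructor
  · intro hm hind
    rw [mem_span_range_iff_exists_fun] at hm
    obtain ⟨c, hc⟩ := hm
    have := Fintype.linearIndependent_iff.mp hind (Sum.elim c (fun _ => (-1 : ℝ))) ?_ (Sum.inr ())
    · norm_num at this
    · rw [Fintype.sum_sum_type]
      simp [hc]
  · intro hind
    by_contra hm
    apply hind
    rw [Fintype.linearIndependent_iff]
    intro g hg
    rw [Fintype.sum_sum_type] at hg
    simp only [Sum.elim_inl, Sum.elim_inr] at hg
    have hg' : ∑ i, g (Sum.inl i) • f i + g (Sum.inr ()) • m = 0 := by
      rw [← hg]; simp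
    obtain ⟨ha, hd⟩ := relation_aux hf hm hg'
    rintro (i | ⟨⟩)
    · exact hd i
    · exact ha

/-- Polynomial Gram matrix of the pencil `t ↦ a + t • d`. -/
noncomputable def pmat {ι : Type*} (a d : ι → (Fin n → ℝ)) : Matrix ι ι ℝ[X] :=
  Matrix.of fun i j =>
    C (a i ⬝ᵥ a j) + C (a i ⬝ᵥ d j + d i ⬝ᵥ a j) * X + C (d i ⬝ᵥ d j) * X ^ 2

noncomputable def pvec {ι : Type*} (a d : ι → (Fin n → ℝ)) (x : Fin n → ℝ) : ι → ℝ[X] :=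
  fun i => C (a i ⬝ᵥ x) + C (d i ⬝ᵥ x) * X

lemma pmat_eval {ι : Type*} [Fintype ι] (a d : ι → (Fin n → ℝ)) (t : ℝ) :
    (pmat a d).map (eval t) = gram (fun i => a i + t • d i) := by
  funext i j
  simp only [pmat, gram, Matrix.map_apply, Matrix.of_apply, eval_add, eval_mul, eval_C, eval_pow,
    eval_X, dotProduct_add, add_dotProduct, dotProduct_smul, smul_dotProduct, smul_eq_mul]
  ring

lemma pvec_eval {ι : Type*} (a d : ι → (Fin n → ℝ)) (x : Fin n → ℝ) (t : ℝ) (i : ι) :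
    eval t (pvec a d x i) = (a i + t • d i) ⬝ᵥ x := by
  simp only [pvec, eval_add, eval_mul, eval_C, eval_X, add_dotProduct, smul_dotProduct,
    smul_eq_mul]
  ring

lemma det_eval {ι : Type*} [Fintype ι] [DecidableEq ι] (M : Matrix ι ι ℝ[X]) (t : ℝ) :
    eval t M.det = (M.map (eval t)).det := by
  have := RingHom.map_det (evalRingHom t) M
  simpa [coe_evalRingHom] using this

lemma cramer_eval {ι : Type*} [Fintype ι] [DecidableEq ι] (M : Matrix ι ι ℝ[X]) (b : ι → ℝ[X])
    (j : ι) (t : ℝ) :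
    eval t (Matrix.cramer M b j) = Matrix.cramer (M.map (eval t)) (fun i => eval t (b i)) j := by
  rw [Matrix.cramer_apply, Matrix.cramer_apply, det_eval, Matrix.map_updateCol]
  rfl

lemma cramer_mulVec_self {ι : Type*} [Fintype ι] [DecidableEq ι] (A : Matrix ι ι ℝ) (c : ι → ℝ) :
    Matrix.cramer A (A *ᵥ c) = A.det • c := by
  rw [Matrix.cramer_eq_adjugate_mulVec, Matrix.mulVec_mulVec, Matrix.adjugate_mul,
    Matrix.smul_mulVec, Matrix.one_mulVec]

section Main

variable {h k : ℕ}

/-- The set of admissible tuples: componentwise in `M j`, and the extended family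
(basis of `W` together with the tuple) is linearly independent. -/
def Kc (b : Fin h → (Fin n → ℝ)) (M : Fin k → Submodule ℝ (Fin n → ℝ)) :
    Set (Fin k → (Fin n → ℝ)) :=
  {v | (∀ j, v j ∈ M j) ∧ LinearIndependent ℝ (Sum.elim b v)}

lemma f1 (b : Fin h → (Fin n → ℝ)) (M : Fin k → Submodule ℝ (Fin n → ℝ))
    {v : Fin k → (Fin n → ℝ)} (hv : v ∈ Kc b M) {x : Fin n → ℝ}
    (hx : ∀ u ∈ Kc b M, x ∈ span ℝ (range (Sum.elim b u)))
    {c : Fin h ⊕ Fin k → ℝ} (hc : x = ∑ i, c i • Sum.elim b v i)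
    {j : Fin k} (hcj : c (Sum.inr j) ≠ 0) {m : Fin n → ℝ} (hm : m ∈ M j) :
    m ∈ span ℝ (range (Sum.elim b v)) := by
  classical
  by_contra hms
  set f : Fin h ⊕ Fin k → (Fin n → ℝ) := Sum.elim b v with hf
  set s : Fin h ⊕ Fin k := Sum.inr j with hs
  have hupd : Sum.elim b (Function.update v j (v j + m)) = Function.update f s (f s + m) := by
    rw [hf, hs]
    rw [Sum.elim_update_right]
    rfl
  have hv' : Function.update v j (v j + m) ∈ Kc b M := by
    constructor
    · intro j'
      by_cases hj' : j' = j
      · rw [hj', Function.update_self]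
        exact Submodule.add_mem _ (hv.1 j) hm
      · rw [Function.update_of_ne hj']
        exact hv.1 j'
    · rw [hupd]
      exact indep_update_add hv.2 hms s
  obtain ⟨c', hc'⟩ := (mem_span_range_iff_exists_fun ℝ).mp (hx _ hv')
  rw [hupd] at hc'
  rw [sum_update_add] at hc'
  -- hc' : ∑ c' i • f i + c' s • m = x
  have hrel : ∑ i, (c' i - c i) • f i + c' s • m = 0 := by
    have : ∑ i, (c' i - c i) • f i = ∑ i, c' i • f i - ∑ i, c i • f i := by
      rw [← Finset.sum_sub_distrib]
      apply Finset.sum_congr rfl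
      intro i _
      rw [sub_smul]
    rw [this, ← hc]
    have := hc'
    rw [← this]
    abel
  obtain ⟨ha, hd⟩ := relation_aux hv.2 hms hrel
  have := hd s
  rw [ha] at hc'
  have hcs : c' s - c s = 0 := hd s
  rw [sub_eq_zero] at hcs
  exact hcj (by rw [← hcs]; exact ha)

lemma f2 (b : Fin h → (Fin n → ℝ)) (M : Fin k → Submodule ℝ (Fin n → ℝ))
    {v u : Fin k → (Fin n → ℝ)} (hv : v ∈ Kc b M) (hu : u ∈ Kc b M) {x : Fin n → ℝ}
    (hx : ∀ w ∈ Kc b M, x ∈ span ℝ (range (Sum.elim b w)))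
    {c : Fin h ⊕ Fin k → ℝ} (hc : x = ∑ i, c i • Sum.elim b v i)
    {j : Fin k} (hcj : c (Sum.inr j) ≠ 0) {m : Fin n → ℝ} (hm : m ∈ M j) :
    m ∈ span ℝ (range (Sum.elim b u)) := by
  classical
  set f0 : Fin h ⊕ Fin k → (Fin n → ℝ) := Sum.elim b v with hf0
  set d : Fin h ⊕ Fin k → (Fin n → ℝ) := Sum.elim (fun _ => 0) (fun i => u i - v i) with hd
  set vt : ℝ → (Fin k → (Fin n → ℝ)) := fun t i => v i + t • (u i - v i) with hvt
  have hft : ∀ t : ℝ, (fun i => f0 i + t • d i) = Sum.elim b (vt t) := by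
    intro t; funext i; cases i <;> simp [hf0, hd, hvt]
  have hvt0 : vt 0 = v := by funext i; simp [hvt]
  have hvt1 : vt 1 = u := by funext i; simp [hvt]
  set p : ℝ[X] := (pmat f0 d).det with hpdef
  set q : ℝ[X] := Matrix.cramer (pmat f0 d) (pvec f0 d x) (Sum.inr j) with hqdef
  set f0' : (Fin h ⊕ Fin k) ⊕ Unit → (Fin n → ℝ) := Sum.elim f0 (fun _ => m) with hf0'
  set d' : (Fin h ⊕ Fin k) ⊕ Unit → (Fin n → ℝ) := Sum.elim d (fun _ => 0) with hd'
  set r : ℝ[X] := (pmat f0' d').det with hrdef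
  have hg' : ∀ t : ℝ, (fun s => f0' s + t • d' s)
      = Sum.elim (Sum.elim b (vt t)) (fun _ : Unit => m) := by
    intro t; funext s
    rcases s with s | s
    · simp only [hf0', hd', Sum.elim_inl]
      exact congrFun (hft t) s
    · simp [hf0', hd']
  have hp : ∀ t : ℝ, eval t p = (gram (Sum.elim b (vt t))).det := by
    intro t; rw [hpdef, det_eval, pmat_eval, hft]
  have hq : ∀ t : ℝ, eval t q
      = Matrix.cramer (gram (Sum.elim b (vt t))) (fun i => Sum.elim b (vt t) i ⬝ᵥ x)
        (Sum.inr j) := by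
    intro t
    rw [hqdef, cramer_eval, pmat_eval, hft]
    have hfuneq : (fun i => Polynomial.eval t (pvec f0 d x i))
        = fun i => Sum.elim b (vt t) i ⬝ᵥ x := by
      funext i
      rw [pvec_eval, congrFun (hft t) i]
    rw [hfuneq]
  have hr : ∀ t : ℝ, eval t r
      = (gram (Sum.elim (Sum.elim b (vt t)) (fun _ : Unit => m))).det := by
    intro t; rw [hrdef, det_eval, pmat_eval, hg']
  have hp0 : eval 0 p ≠ 0 := by
    rw [hp, hvt0]
    exact (gram_det_ne_zero_iff _).mpr hv.2
  have hq0 : eval 0 q ≠ 0 := by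
    rw [hq, hvt0]
    have hmv : (gram (Sum.elim b v)) *ᵥ c = fun i => Sum.elim b v i ⬝ᵥ x := by
      rw [gram_mulVec]
      funext i
      rw [← hc]
    rw [← hmv, cramer_mulVec_self]
    simp only [Pi.smul_apply, smul_eq_mul]
    exact mul_ne_zero ((gram_det_ne_zero_iff _).mpr hv.2) hcj
  have hpne : p ≠ 0 := fun h0 => hp0 (by rw [h0, eval_zero])
  have hqne : q ≠ 0 := fun h0 => hq0 (by rw [h0, eval_zero])
  have key : ∀ t : ℝ, ¬ p.IsRoot t → ¬ q.IsRoot t → r.IsRoot t := by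
    intro t hpt hqt
    have hvtK : vt t ∈ Kc b M := by
      constructor
      · intro i
        exact Submodule.add_mem _ (hv.1 i)
          (Submodule.smul_mem _ _ (Submodule.sub_mem _ (hu.1 i) (hv.1 i)))
      · exact (gram_det_ne_zero_iff _).mp (by rw [← hp]; exact hpt)
    obtain ⟨ct, hct⟩ := (mem_span_range_iff_exists_fun ℝ).mp (hx _ hvtK)
    have hmvt : (gram (Sum.elim b (vt t))) *ᵥ ct = fun i => Sum.elim b (vt t) i ⬝ᵥ x := by
      rw [gram_mulVec]
      funext i
      rw [hct]
    have hctj : ct (Sum.inr j) ≠ 0 := by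
      intro h0
      apply hqt
      show eval t q = 0
      rw [hq, ← hmvt, cramer_mulVec_self]
      simp [h0]
    have hmem : m ∈ span ℝ (range (Sum.elim b (vt t))) :=
      f1 b M hvtK hx hct.symm hctj hm
    have hdep : ¬ LinearIndependent ℝ (Sum.elim (Sum.elim b (vt t)) (fun _ : Unit => m)) :=
      (mem_span_extend hvtK.2 m).mp hmem
    show eval t r = 0
    rw [hr]
    by_contra hne
    exact hdep ((gram_det_ne_zero_iff _).mp hne)
  have hroots : {t : ℝ | r.IsRoot t}.Infinite := by
    apply Set.Infinite.mono (s := ({t : ℝ | p.IsRoot t} ∪ {t : ℝ | q.IsRoot t})ᶜ)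
    · intro t ht
      rw [Set.mem_compl_iff, Set.mem_union] at ht
      push_neg at ht
      exact key t ht.1 ht.2
    · exact Set.Finite.infinite_compl
        ((Polynomial.finite_setOf_isRoot hpne).union (Polynomial.finite_setOf_isRoot hqne))
  have hr0 : r = 0 := Polynomial.eq_zero_of_infinite_isRoot r hroots
  have h1 : (gram (Sum.elim (Sum.elim b u) (fun _ : Unit => m))).det = 0 := by
    rw [← hvt1, ← hr 1, hr0, eval_zero]
  have hnind : ¬ LinearIndependent ℝ (Sum.elim (Sum.elim b u) (fun _ : Unit => m)) :=
    fun hind => ((gram_det_ne_zero_iff _).mpr hind) h1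
  exact (mem_span_extend hu.2 m).mpr hnind

end Main

end InterSupAux

open InterSupAux

/-- Footnote refinement of Proposition fact:Adim: if `K^c ≠ ∅` and moreover
`dim(W + Σ_{j∈γ} M_j) ≥ h + card γ`, then `A = W + Σ_{j∈γ} M_j` and `dim A = h + card γ`. -/
theorem inter_eq_sup_of_dim_ge
    (n k : ℕ) (hk : 1 ≤ k) (W : Submodule ℝ (Fin n → ℝ))
    (M : Fin k → Submodule ℝ (Fin n → ℝ)) (hM : ∀ j, M j ≠ ⊥)
    (hne : ∃ v : Fin k → (Fin n → ℝ), (∀ j, v j ∈ M j) ∧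
      Module.finrank ℝ ↥(W ⊔ Submodule.span ℝ (Set.range v)) =
        Module.finrank ℝ ↥W + k)
    (Asub : Submodule ℝ (Fin n → ℝ))
    (hA : Asub = ⨅ (v : Fin k → (Fin n → ℝ)) (_ : (∀ j, v j ∈ M j) ∧
        Module.finrank ℝ ↥(W ⊔ Submodule.span ℝ (Set.range v)) =
          Module.finrank ℝ ↥W + k),
      W ⊔ Submodule.span ℝ (Set.range v))
    (γ : Finset (Fin k)) (hγ : ∀ j, j ∈ γ ↔ M j ≤ Asub)
    (hdim : Module.finrank ℝ ↥W + γ.card ≤ Module.finrank ℝ ↥(W ⊔ ⨆ j ∈ γ, M j)) :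
    Asub = W ⊔ ⨆ j ∈ γ, M j ∧
      Module.finrank ℝ ↥Asub = Module.finrank ℝ ↥W + γ.card := by
  classical
  set h := Module.finrank ℝ ↥W with hh
  let bW := Module.finBasis ℝ ↥W
  set b : Fin h → (Fin n → ℝ) := fun i => (bW i : Fin n → ℝ) with hb
  have hbW : ∀ i, b i ∈ W := fun i => (bW i).2
  have hbspan : Submodule.span ℝ (Set.range b) = W := by
    have h1 : Set.range b = W.subtype '' (Set.range bW) := by
      rw [← Set.range_comp]; rfl
    rw [h1, ← Submodule.map_span, bW.span_eq, Submodule.map_top, Submodule.range_subtype]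
  have hQ : ∀ v : Fin k → (Fin n → ℝ),
      W ⊔ Submodule.span ℝ (Set.range v) = Submodule.span ℝ (Set.range (Sum.elim b v)) := by
    intro v
    rw [Sum.elim_range, Submodule.span_union, hbspan]
  have hpred : ∀ v : Fin k → (Fin n → ℝ),
      ((∀ j, v j ∈ M j) ∧ Module.finrank ℝ ↥(W ⊔ Submodule.span ℝ (Set.range v)) =
        Module.finrank ℝ ↥W + k) ↔ v ∈ Kc b M := by
    intro v
    have hcard : Fintype.card (Fin h ⊕ Fin k) = h + k := by simp
    constructor
    · rintro ⟨h1, h2⟩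
      refine ⟨h1, ?_⟩
      rw [linearIndependent_iff_card_eq_finrank_span, hcard, Set.finrank, ← hQ v]
      exact h2.symm
    · rintro ⟨h1, h2⟩
      refine ⟨h1, ?_⟩
      rw [linearIndependent_iff_card_eq_finrank_span, hcard, Set.finrank, ← hQ v] at h2
      exact h2.symm
  have hAB : Asub = ⨅ (v : Fin k → (Fin n → ℝ)) (_ : v ∈ Kc b M),
      Submodule.span ℝ (Set.range (Sum.elim b v)) := by
    rw [hA]
    apply le_antisymm
    · exact le_iInf₂ fun v hv =>
        (iInf₂_le v ((hpred v).mpr hv)).trans (le_of_eq (hQ v))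
    · exact le_iInf₂ fun v hv =>
        (iInf₂_le v ((hpred v).mp hv)).trans (le_of_eq (hQ v).symm)
  have hxB : ∀ x ∈ Asub, ∀ u ∈ Kc b M, x ∈ Submodule.span ℝ (Set.range (Sum.elim b u)) := by
    intro x hx u hu
    rw [hAB, Submodule.mem_iInf] at hx
    have := hx u
    rw [Submodule.mem_iInf] at this
    exact this hu
  obtain ⟨v0, hv0⟩ := hne
  have hv0K : v0 ∈ Kc b M := (hpred v0).mp hv0
  -- main inclusion
  have hAle : Asub ≤ W ⊔ Submodule.span ℝ (v0 '' ↑γ) := by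
    intro x hx
    obtain ⟨c, hc⟩ := (mem_span_range_iff_exists_fun ℝ).mp (hxB x hx v0 hv0K)
    rw [← hc, Fintype.sum_sum_type]
    apply Submodule.add_mem
    · apply Submodule.mem_sup_left
      exact Submodule.sum_mem _ fun i _ => Submodule.smul_mem _ _ (by simpa using hbW i)
    · apply Submodule.sum_mem
      intro j _
      by_cases hcj : c (Sum.inr j) = 0
      · simp [hcj]
      · have hjγ : j ∈ γ := by
          apply (hγ j).mpr
          intro m hm
          rw [hAB, Submodule.mem_iInf]
          intro u
          rw [Submodule.mem_iInf]
          intro hu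
          exact f2 b M hv0K hu (hxB x hx) hc.symm hcj hm
        apply Submodule.mem_sup_right
        apply Submodule.smul_mem
        apply Submodule.subset_span
        exact ⟨j, hjγ, rfl⟩
  have hWle : W ≤ Asub := by
    rw [hA]
    exact le_iInf₂ fun v hv => le_sup_left
  have hsupA : W ⊔ (⨆ j ∈ γ, M j) ≤ Asub :=
    sup_le hWle (iSup₂_le fun j hj => (hγ j).mp hj)
  have himg : Submodule.span ℝ (v0 '' ↑γ) ≤ ⨆ j ∈ γ, M j := by
    rw [Submodule.span_le]
    rintro z ⟨j, hj, rfl⟩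
    exact le_iSup₂ (f := fun j (_ : j ∈ γ) => M j) j hj (hv0.1 j)
  have hAeq : Asub = W ⊔ ⨆ j ∈ γ, M j :=
    le_antisymm (hAle.trans (sup_le_sup_left himg W)) hsupA
  refine ⟨hAeq, ?_⟩
  have hle : Module.finrank ℝ ↥Asub ≤ Module.finrank ℝ ↥W + γ.card := by
    have h1 : Module.finrank ℝ ↥Asub
        ≤ Module.finrank ℝ ↥(W ⊔ Submodule.span ℝ (v0 '' ↑γ)) :=
      Submodule.finrank_mono hAle
    have h2 : Module.finrank ℝ ↥(W ⊔ Submodule.span ℝ (v0 '' ↑γ))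
        ≤ Module.finrank ℝ ↥W + Module.finrank ℝ ↥(Submodule.span ℝ (v0 '' ↑γ)) :=
      Submodule.finrank_add_le_finrank_add_finrank _ _
    have h3 : Module.finrank ℝ ↥(Submodule.span ℝ (v0 '' ↑γ)) ≤ γ.card := by
      have himg2 : v0 '' ↑γ = ↑(γ.image v0) := (Finset.coe_image).symm
      rw [himg2]
      exact le_trans (finrank_span_finset_le_card _) Finset.card_image_le
    omega
  have hge : Module.finrank ℝ ↥W + γ.card ≤ Module.finrank ℝ ↥Asub := by
    rw [hAeq]; exact hdim
  omega
end

section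
/- Let W be a subspace of ℝ^n with h := dim W, let z_1,…,z_k ∈ ℝ^n be such that dim(W + span{z_1,…,z_k}) = h + k, and set B_0 := W + span{z_1,…,z_k}. Let δ ⊆ {1,…,k}, let j ∈ δ, let w ∈ ℝ^n with w ∉ B_0, and set B_j := W + span{z_1,…,z_{j−1}, w, z_{j+1},…,z_k}. Then (W + Σ_{i∈δ} span{z_i}) ∩ B_j = W + Σ_{i∈δ∖{j}} span{z_i}. -/
/-!
Modulo `W`, the vectors `z_1, …, z_k` are linearly independent (this is the dimension
hypothesis) and `w` lies outside their span, so `w, z_1, …, z_k` is linearly independent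
modulo `W`. Both `W + Σ_{i∈δ} span{z_i}` and `B_j` are `W` plus the span of a subfamily of
it, indexed by `δ` and by `{w} ∪ {z_i : i ≠ j}`; for an independent family such spans
intersect in the span of the common subfamily, here `δ ∖ {j}`.
-/

open Submodule Set Function Module

theorem LinearIndependent.inf_span_image {R M ι : Type*} [Ring R] [AddCommGroup M] [Module R M]
    {v : ι → M} (hv : LinearIndependent R v) (s t : Set ι) :
    span R (v '' s) ⊓ span R (v '' t) = span R (v '' (s ∩ t)) := by
  simp only [Finsupp.span_image_eq_map_linearCombination, Finsupp.supported_inter, map_inf _ hv]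

namespace Submodule

theorem sup_span_image_inf_sup_span_image {R M ι : Type*} [Ring R] [AddCommGroup M]
    [Module R M] (W : Submodule R M) {v : ι → M} (hv : LinearIndependent R (W.mkQ ∘ v))
    (s t : Set ι) :
    (W ⊔ span R (v '' s)) ⊓ (W ⊔ span R (v '' t)) = W ⊔ span R (v '' (s ∩ t)) := by
  have hcomap (u : Set ι) :
      W ⊔ span R (v '' u) = comap W.mkQ (span R ((W.mkQ ∘ v) '' u)) := by
    rw [image_comp, ← map_span, comap_map_mkQ]
  simp only [hcomap, ← comap_inf, hv.inf_span_image]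

theorem linearIndependent_mkQ_of_finrank_sup_span {K V ι : Type*} [DivisionRing K]
    [AddCommGroup V] [Module K V] [FiniteDimensional K V] [Fintype ι] {W : Submodule K V}
    {z : ι → V} (hdim : finrank K ↥(W ⊔ span K (range z)) = finrank K W + Fintype.card ι) :
    LinearIndependent K (W.mkQ ∘ z) := by
  have hsum := finrank_sup_add_finrank_inf_eq W (span K (range z))
  have hle : finrank K (span K (range z)) ≤ Fintype.card ι := finrank_range_le_card z
  have hz : LinearIndependent K z := by
    rw [linearIndependent_iff_card_eq_finrank_span, Set.finrank]; omega
  have hinf : W ⊓ span K (range z) = ⊥ := finrank_eq_zero.mp (by omega)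
  exact hz.map (by rw [ker_mkQ, disjoint_iff, inf_comm, hinf])

theorem mkQ_mem_span_range_iff_s11 {R M ι : Type*} [Ring R] [AddCommGroup M] [Module R M]
    (W : Submodule R M) (z : ι → M) (w : M) :
    W.mkQ w ∈ span R (range (W.mkQ ∘ z)) ↔ w ∈ W ⊔ span R (range z) := by
  rw [range_comp, ← map_span, ← mem_comap, comap_map_mkQ]

theorem iSup_span_singleton_eq_span_image {R M ι : Type*} [Semiring R] [AddCommMonoid M]
    [Module R M] (f : ι → M) (s : Finset ι) : ⨆ i ∈ s, span R {f i} = span R (f '' s) := by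
  rw [span_eq_iSup_of_singleton_spans, iSup_image]
  simp only [Finset.mem_coe]

end Submodule

theorem Option.image_some_inter_range_update_some {ι : Type*} [DecidableEq ι] (s : Set ι)
    (j : ι) : some '' s ∩ range (update some j none) = some '' (s \ {j}) := by
  ext (_ | i) <;> simp [update_apply, eq_comm]

theorem inter_update_eq_general
    (n k : ℕ) (W : Submodule ℝ (Fin n → ℝ)) (z : Fin k → (Fin n → ℝ))
    (hdim : Module.finrank ℝ ↥(W ⊔ Submodule.span ℝ (Set.range z)) =
      Module.finrank ℝ ↥W + k)
    (δ : Finset (Fin k)) (j : Fin k)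
    (w : Fin n → ℝ) (hw : w ∉ W ⊔ Submodule.span ℝ (Set.range z)) :
    (W ⊔ ⨆ i ∈ δ, Submodule.span ℝ {z i}) ⊓
        (W ⊔ Submodule.span ℝ (Set.range (Function.update z j w))) =
      W ⊔ ⨆ i ∈ δ.erase j, Submodule.span ℝ {z i} := by
  set v : Option (Fin k) → Fin n → ℝ := fun o => Option.casesOn' o w z
  have hz := W.linearIndependent_mkQ_of_finrank_sup_span (hdim.trans (by simp))
  have hv : LinearIndependent ℝ (W.mkQ ∘ v) := by
    convert hz.option ((W.mkQ_mem_span_range_iff_s11 z w).not.mpr hw) with (_ | _) <;> rfl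
  have hupdate : update z j w = v ∘ update some j none := by
    rw [comp_update]; rfl
  have hsome (s : Set (Fin k)) : z '' s = v '' (some '' s) := by
    rw [image_image]; rfl
  rw [iSup_span_singleton_eq_span_image, iSup_span_singleton_eq_span_image, hupdate, range_comp,
    hsome, hsome, W.sup_span_image_inf_sup_span_image hv,
    Option.image_some_inter_range_update_some, Finset.coe_erase]

/-- Identity (eq:lemdelta) from the proof of Proposition fact:Adim:
`(W + Σ_{i∈δ} span{z_i}) ∩ B_j = W + Σ_{i∈δ∖{j}} span{z_i}`. -/
theorem inter_update_eq
    (n k : ℕ) (W : Submodule ℝ (Fin n → ℝ)) (z : Fin k → (Fin n → ℝ))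
    (hdim : Module.finrank ℝ ↥(W ⊔ Submodule.span ℝ (Set.range z)) =
      Module.finrank ℝ ↥W + k)
    (δ : Finset (Fin k)) (j : Fin k) (hj : j ∈ δ)
    (w : Fin n → ℝ) (hw : w ∉ W ⊔ Submodule.span ℝ (Set.range z)) :
    (W ⊔ ⨆ i ∈ δ, Submodule.span ℝ {z i}) ⊓
        (W ⊔ Submodule.span ℝ (Set.range (Function.update z j w))) =
      W ⊔ ⨆ i ∈ δ.erase j, Submodule.span ℝ {z i} :=
  inter_update_eq_general n k W z hdim δ j w hw
end

section
/- Let W be a subspace of ℝ^n with h := dim W, let z_1,…,z_k ∈ ℝ^n be such that dim(W + span{z_1,…,z_k}) = h + k, and set B_0 := W + span{z_1,…,z_k}. Let γ ⊆ {1,…,k} and let γ^c := {1,…,k} ∖ γ; for each j ∈ γ^c let w_j ∈ ℝ^n with w_j ∉ B_0, and set B_j := W + span{z_1,…,z_{j−1}, w_j, z_{j+1},…,z_k}. Then B_0 ∩ (⋂_{j∈γ^c} B_j) = W + Σ_{i∈γ} span{z_i}, and in particular dim(B_0 ∩ ⋂_{j∈γ^c} B_j) = h + card(γ). -/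
set_option maxHeartbeats 1000000

open Submodule Module

private lemma finrank_sup_le' {n : ℕ} (s t : Submodule ℝ (Fin n → ℝ)) :
    finrank ℝ ↥(s ⊔ t) ≤ finrank ℝ ↥s + finrank ℝ ↥t := by
  have := Submodule.finrank_sup_add_finrank_inf_eq s t
  omega

private lemma finrank_span_finset_image_le {n k : ℕ} (z : Fin k → (Fin n → ℝ))
    (A : Finset (Fin k)) :
    finrank ℝ ↥(span ℝ ((A.image z : Finset (Fin n → ℝ)) : Set (Fin n → ℝ))) ≤ A.card :=
  (finrank_span_finset_le_card (A.image z)).trans Finset.card_image_le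

/-- Identity (eq:inters) from the proof of Proposition fact:Adim:
`B_0 ∩ (⋂_{j∈γᶜ} B_j) = W + Σ_{i∈γ} span{z_i}`, whose dimension is `h + card γ`. -/
theorem inter_family_eq
    (n k : ℕ) (W : Submodule ℝ (Fin n → ℝ)) (z : Fin k → (Fin n → ℝ))
    (hdim : Module.finrank ℝ ↥(W ⊔ Submodule.span ℝ (Set.range z)) =
      Module.finrank ℝ ↥W + k)
    (γ : Finset (Fin k)) (w : Fin k → (Fin n → ℝ))
    (hw : ∀ j ∈ γᶜ, w j ∉ W ⊔ Submodule.span ℝ (Set.range z)) :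
    (W ⊔ Submodule.span ℝ (Set.range z)) ⊓
        (⨅ j ∈ γᶜ, W ⊔ Submodule.span ℝ (Set.range (Function.update z j (w j)))) =
      W ⊔ ⨆ i ∈ γ, Submodule.span ℝ {z i} ∧
    Module.finrank ℝ
        ↥((W ⊔ Submodule.span ℝ (Set.range z)) ⊓
          (⨅ j ∈ γᶜ, W ⊔ Submodule.span ℝ (Set.range (Function.update z j (w j))))) =
      Module.finrank ℝ ↥W + γ.card := by
  classical
  set B0 : Submodule ℝ (Fin n → ℝ) := W ⊔ span ℝ (Set.range z) with hB0
  set C : Fin k → Submodule ℝ (Fin n → ℝ) :=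
    fun j => W ⊔ span ℝ (((Finset.univ.erase j).image z : Finset (Fin n → ℝ)) :
      Set (Fin n → ℝ)) with hCdef
  set B : Fin k → Submodule ℝ (Fin n → ℝ) :=
    fun j => W ⊔ span ℝ (Set.range (Function.update z j (w j))) with hBdef
  set D : Submodule ℝ (Fin n → ℝ) := W ⊔ ⨆ i ∈ γ, span ℝ {z i} with hDdef
  -- basic memberships
  have hziC : ∀ (j i : Fin k), i ≠ j → z i ∈ C j := by
    intro j i hij
    refine le_sup_right (a := W) ?_
    exact subset_span (by simp only [Finset.coe_image, Set.mem_image]; exact ⟨i, by simp [hij], rfl⟩)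
  have hCB0 : ∀ j, C j ≤ B0 := by
    intro j
    have hsub : ((Finset.image z (Finset.univ.erase j)) : Set (Fin n → ℝ)) ⊆ Set.range z := by
      intro x hx
      simp only [Finset.coe_image, Set.mem_image] at hx
      obtain ⟨i, -, rfl⟩ := hx
      exact Set.mem_range_self i
    exact sup_le le_sup_left ((span_mono hsub).trans le_sup_right)
  -- Fact A : z j ∉ C j
  have hindep : ∀ j, z j ∉ C j := by
    intro j hj
    have hle : B0 ≤ C j := by
      refine sup_le le_sup_left (span_le.2 ?_)
      rintro x ⟨i, rfl⟩
      by_cases hij : i = j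
      · subst hij; exact hj
      · exact hziC j i hij
    have h1 : finrank ℝ ↥B0 ≤ finrank ℝ ↥(C j) := Submodule.finrank_mono hle
    have h2 : finrank ℝ ↥(C j) ≤ finrank ℝ ↥W + (Finset.univ.erase j).card :=
      le_trans (finrank_sup_le' _ _)
        (by gcongr; exact finrank_span_finset_image_le z _)
    have h3 : (Finset.univ.erase j).card = k - 1 := by
      rw [Finset.card_erase_of_mem (Finset.mem_univ j), Finset.card_univ, Fintype.card_fin]
    have hk : 1 ≤ k := Nat.one_le_iff_ne_zero.2 (by rintro rfl; exact j.elim0)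
    rw [hdim] at h1
    omega
  -- Fact B : B0 ⊓ B j = C j for j ∈ γᶜ
  have hBC : ∀ j ∈ γᶜ, B0 ⊓ B j = C j := by
    intro j hj
    have hCBj : C j ≤ B j := by
      refine sup_le le_sup_left (le_trans (span_mono ?_) le_sup_right)
      intro x hx
      simp only [Finset.coe_image, Set.mem_image] at hx
      obtain ⟨i, hi, rfl⟩ := hx
      have hij : i ≠ j := by simpa using hi
      exact ⟨i, by simp [Function.update_of_ne hij]⟩
    refine le_antisymm ?_ (le_inf (hCB0 j) hCBj)
    intro x hx
    obtain ⟨hx0, hxj⟩ := Submodule.mem_inf.1 hx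
    have hBjle : B j ≤ C j ⊔ span ℝ {w j} := by
      refine sup_le (le_trans le_sup_left le_sup_left) (span_le.2 ?_)
      rintro y ⟨i, rfl⟩
      by_cases hij : i = j
      · refine le_sup_right (a := C j) ?_
        rw [hij, Function.update_self]
        exact subset_span rfl
      · exact le_sup_left (b := span ℝ {w j})
          (by rw [Function.update_of_ne hij]; exact hziC j i hij)
    obtain ⟨c, hc, y, hy, rfl⟩ := Submodule.mem_sup.1 (hBjle hxj)
    obtain ⟨b, rfl⟩ := Submodule.mem_span_singleton.1 hy
    rcases eq_or_ne b 0 with rfl | hb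
    · simpa using hc
    · exfalso
      have hbw : b • w j ∈ B0 := by
        have := Submodule.sub_mem B0 hx0 (hCB0 j hc)
        simpa using this
      have : w j ∈ B0 := by
        have := Submodule.smul_mem B0 b⁻¹ hbw
        rwa [inv_smul_smul₀ hb] at this
      exact hw j hj this
  -- reduce LHS to B0 ⊓ ⨅ C j
  have hL : B0 ⊓ (⨅ j ∈ γᶜ, B j) = B0 ⊓ (⨅ j ∈ γᶜ, C j) := by
    refine le_antisymm (le_inf inf_le_left (le_iInf₂ fun j hj => ?_))
      (le_inf inf_le_left (le_iInf₂ fun j hj => ?_))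
    · rw [← hBC j hj]
      exact inf_le_inf_left B0 (iInf₂_le j hj)
    · refine le_trans inf_le_right (le_trans (iInf₂_le j hj) ?_)
      rw [← hBC j hj]; exact inf_le_right
  -- Fact C : B0 ⊓ ⨅ C j = D
  have hDB0 : D ≤ B0 := by
    refine sup_le le_sup_left (iSup₂_le fun i _ => le_trans (span_mono ?_) le_sup_right)
    exact Set.singleton_subset_iff.2 (Set.mem_range_self i)
  have hmain : B0 ⊓ (⨅ j ∈ γᶜ, C j) = D := by
    refine le_antisymm ?_ (le_inf hDB0 (le_iInf₂ fun j hj => ?_))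
    · intro x hx
      obtain ⟨hx0, hxI⟩ := Submodule.mem_inf.1 hx
      have hxC : ∀ j ∈ γᶜ, x ∈ C j := by
        intro j hj
        exact (iInf₂_le j hj : (⨅ j ∈ γᶜ, C j) ≤ C j) hxI
      obtain ⟨p, hp, y, hy, rfl⟩ := Submodule.mem_sup.1 hx0
      obtain ⟨a, rfl⟩ := (mem_span_range_iff_exists_fun ℝ).1 hy
      have ha : ∀ j ∈ γᶜ, a j = 0 := by
        intro j hj
        by_contra haj
        have hsum : (∑ i ∈ Finset.univ.erase j, a i • z i) ∈ C j :=
          Submodule.sum_mem _ fun i hi => Submodule.smul_mem _ _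
            (hziC j i (Finset.mem_erase.1 hi).1)
        have hsplit : a j • z j
            = (p + ∑ i, a i • z i) - p - ∑ i ∈ Finset.univ.erase j, a i • z i := by
          rw [Finset.sum_erase_eq_sub (Finset.mem_univ j)]
          abel
        have hzjC : a j • z j ∈ C j := by
          rw [hsplit]
          exact Submodule.sub_mem _ (Submodule.sub_mem _ (hxC j hj)
            (Submodule.mem_sup_left hp)) hsum
        exact hindep j (by
          have := Submodule.smul_mem (C j) (a j)⁻¹ hzjC
          rwa [inv_smul_smul₀ haj] at this)
      have hsum2 : (∑ i, a i • z i) = ∑ i ∈ γ, a i • z i := by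
        refine (Finset.sum_subset (Finset.subset_univ γ) ?_).symm
        intro i _ hi
        rw [ha i (Finset.mem_compl.2 hi), zero_smul]
      rw [hsum2]
      refine Submodule.add_mem_sup hp (Submodule.sum_mem _ fun i hi => ?_)
      exact Submodule.smul_mem _ _
        ((le_iSup₂ (f := fun i _ => span ℝ {z i}) i hi) (mem_span_singleton_self (z i)))
    · refine sup_le le_sup_left (iSup₂_le fun i hi => ?_)
      have hij : i ≠ j := by
        rintro rfl; exact (Finset.mem_compl.1 hj) hi
      exact le_trans (span_le.2 (Set.singleton_subset_iff.2 (hziC j i hij))) le_rfl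
  -- dimension of D
  have hsupD : (⨆ i ∈ γ, span ℝ {z i})
      = span ℝ ((γ.image z : Finset (Fin n → ℝ)) : Set (Fin n → ℝ)) := by
    refine le_antisymm (iSup₂_le fun i hi => span_mono ?_) (span_le.2 ?_)
    · exact Set.singleton_subset_iff.2 (by simp; exact ⟨i, hi, rfl⟩)
    · intro x hx
      simp only [Finset.coe_image, Set.mem_image, Finset.mem_coe] at hx
      obtain ⟨i, hi, rfl⟩ := hx
      exact (le_iSup₂ (f := fun i _ => span ℝ {z i}) i hi) (mem_span_singleton_self (z i))
  have hDle : finrank ℝ ↥D ≤ finrank ℝ ↥W + γ.card := by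
    rw [hDdef, hsupD]
    exact le_trans (finrank_sup_le' _ _) (by gcongr; exact finrank_span_finset_image_le z γ)
  have hB0le : finrank ℝ ↥B0 ≤ finrank ℝ ↥D + (k - γ.card) := by
    have hsub : B0 ≤ D ⊔ span ℝ ((γᶜ.image z : Finset (Fin n → ℝ)) : Set (Fin n → ℝ)) := by
      refine sup_le (le_trans le_sup_left (le_sup_left (b := span ℝ _))) (span_le.2 ?_)
      rintro x ⟨i, rfl⟩
      by_cases hi : i ∈ γ
      · refine Submodule.mem_sup_left (Submodule.mem_sup_right ?_)
        exact (le_iSup₂ (f := fun i _ => span ℝ {z i}) i hi) (mem_span_singleton_self (z i))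
      · exact Submodule.mem_sup_right
          (subset_span (Finset.mem_coe.2 (Finset.mem_image.2 ⟨i, Finset.mem_compl.2 hi, rfl⟩)))
    have h1 : finrank ℝ ↥B0 ≤ finrank ℝ ↥D
        + finrank ℝ ↥(span ℝ ((γᶜ.image z : Finset (Fin n → ℝ)) : Set (Fin n → ℝ))) :=
      le_trans (Submodule.finrank_mono hsub) (finrank_sup_le' _ _)
    have h2 := finrank_span_finset_image_le z γᶜ
    have h3 : γᶜ.card = k - γ.card := by
      rw [Finset.card_compl, Fintype.card_fin]
    omega
  have hcard : γ.card ≤ k := by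
    have := Finset.card_le_univ γ
    simpa using this
  have hDrank : finrank ℝ ↥D = finrank ℝ ↥W + γ.card := by
    rw [hdim] at hB0le; omega
  refine ⟨by rw [hL, hmain], ?_⟩
  rw [show ((W ⊔ Submodule.span ℝ (Set.range z)) ⊓
      (⨅ j ∈ γᶜ, W ⊔ Submodule.span ℝ (Set.range (Function.update z j (w j))))) = D from
    by rw [← hmain, ← hL]]
  exact hDrank
end

section
/- Let W be a subspace of ℝ^n with h := dim W and let c ≥ 1. For each j ∈ {1,…,c+1} let r_j ≥ 1 and let R_j^1,…,R_j^{r_j} be subspaces of ℝ^n, and set R_j := R_j^1 + ⋯ + R_j^{r_j}. Suppose that for every node (t_1,…,t_{c+1}) with t_j ∈ {1,…,r_j}: (i) for every proper subset S ⊊ {1,…,c+1}, dim(W + Σ_{j∈S} R_j^{t_j}) ≥ h + card(S), and (ii) dim(W + Σ_{j=1}^{c+1} R_j^{t_j}) < h + c + 1. Then dim(W + Σ_{j=1}^{c+1} R_j) = h + c. -/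
/-- Abstract content of Lemma Badlambda (Appendix B): if every grid node satisfies the
proper-subset dimension lower bounds but fails the full bound, then
`dim(W + Σ_j R_j) = h + c`. -/
theorem grid_lemma
    (n c : ℕ) (hc : 1 ≤ c) (W : Submodule ℝ (Fin n → ℝ))
    (r : Fin (c + 1) → ℕ) (hr : ∀ j, 1 ≤ r j)
    (R : (j : Fin (c + 1)) → Fin (r j) → Submodule ℝ (Fin n → ℝ))
    (hnode : ∀ t : (j : Fin (c + 1)) → Fin (r j),
      (∀ S : Finset (Fin (c + 1)), S ≠ Finset.univ →
        Module.finrank ℝ ↥W + S.card ≤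
          Module.finrank ℝ ↥(W ⊔ ⨆ j ∈ S, R j (t j))) ∧
      Module.finrank ℝ ↥(W ⊔ ⨆ j, R j (t j)) <
        Module.finrank ℝ ↥W + c + 1) :
    Module.finrank ℝ ↥(W ⊔ ⨆ j, ⨆ i, R j i) = Module.finrank ℝ ↥W + c := by
  classical
  set h := Module.finrank ℝ ↥W with hh
  let t0 : (j : Fin (c + 1)) → Fin (r j) := fun j => ⟨0, hr j⟩
  have hcard : ∀ j : Fin (c + 1), (Finset.univ.erase j).card = c := by
    intro j
    rw [Finset.card_erase_of_mem (Finset.mem_univ j), Finset.card_univ, Fintype.card_fin]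
    omega
  have hlow : ∀ t : (j : Fin (c + 1)) → Fin (r j), ∀ j,
      h + c ≤ Module.finrank ℝ ↥(W ⊔ ⨆ k ∈ Finset.univ.erase j, R k (t k)) := by
    intro t j
    have hne : (Finset.univ.erase j) ≠ Finset.univ := by
      intro hEq
      have : j ∈ Finset.univ.erase j := by rw [hEq]; exact Finset.mem_univ j
      exact (Finset.mem_erase.mp this).1 rfl
    have := (hnode t).1 (Finset.univ.erase j) hne
    rwa [hcard] at this
  have hhigh : ∀ t : (j : Fin (c + 1)) → Fin (r j),
      Module.finrank ℝ ↥(W ⊔ ⨆ k, R k (t k)) ≤ h + c := by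
    intro t
    have := (hnode t).2
    omega
  -- key: every R j i is inside V := W ⊔ ⨆ k, R k (t0 k)
  have key : ∀ j (i : Fin (r j)), R j i ≤ W ⊔ ⨆ k, R k (t0 k) := by
    intro j i
    set t := Function.update t0 j i with ht
    have hUle : (W ⊔ ⨆ k ∈ Finset.univ.erase j, R k (t k)) ≤ W ⊔ ⨆ k, R k (t k) :=
      sup_le_sup_left (iSup_le fun k => iSup_le fun _ => le_iSup (fun k => R k (t k)) k) W
    have hEq : (W ⊔ ⨆ k ∈ Finset.univ.erase j, R k (t k)) = W ⊔ ⨆ k, R k (t k) :=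
      Submodule.eq_of_le_of_finrank_le hUle (le_trans (hhigh t) (hlow t j))
    have hRj : R j i ≤ W ⊔ ⨆ k, R k (t k) := by
      have : R j (t j) ≤ ⨆ k, R k (t k) := le_iSup (fun k => R k (t k)) j
      have htj : t j = i := Function.update_self j i t0
      rw [htj] at this
      exact le_trans this le_sup_right
    rw [← hEq] at hRj
    refine le_trans hRj (sup_le_sup_left (iSup_le fun k => iSup_le fun hk => ?_) W)
    have hkj : k ≠ j := (Finset.mem_erase.mp hk).1
    have htk : t k = t0 k := Function.update_of_ne hkj i t0
    rw [htk]
    exact le_iSup (fun k => R k (t0 k)) k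
  have hfull : (W ⊔ ⨆ j, ⨆ i, R j i) = W ⊔ ⨆ k, R k (t0 k) := by
    refine le_antisymm (sup_le le_sup_left (iSup_le fun j => iSup_le fun i => key j i)) ?_
    exact sup_le_sup_left (iSup_le fun k =>
      le_trans (le_iSup (fun i => R k i) (t0 k)) (le_iSup (fun j => ⨆ i, R j i) k)) W
  rw [hfull]
  refine le_antisymm (hhigh t0) ?_
  refine le_trans (hlow t0 ⟨0, by omega⟩) (Submodule.finrank_mono ?_)
  exact sup_le_sup_left (iSup_le fun k => iSup_le fun _ => le_iSup (fun k => R k (t0 k)) k) W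
end

section
/- Let μ ∈ ℝ and j ∈ {1,…,p}. Assume that the Rosenbrock matrix P(μ) has full row rank n + p, and that the linear map w ↦ (Bw, D_(j)w) from ℝ^m to ℝ^n × ℝ^{p−1} is injective, where D_(j) denotes D with its j-th row deleted. Then dim R⋆(μ) = m − p and dim R⋆_j(μ) = m − p + 1; in particular R⋆(μ) is a proper subspace of R⋆_j(μ). -/
lemma aux_finrank (n m k : ℕ)
    (T : ((Fin n → ℝ) × (Fin m → ℝ)) →ₗ[ℝ] ((Fin n → ℝ) × (Fin k → ℝ)))
    (hT : Function.Surjective T)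
    (S : Submodule ℝ (Fin n → ℝ))
    (hSmem : ∀ v, v ∈ S ↔ ∃ w, T (v, w) = 0)
    (hwinj : ∀ v w w', T (v, w) = 0 → T (v, w') = 0 → w = w') :
    Module.finrank ℝ S = m - k ∧ k ≤ m := by
  classical
  set f := (LinearMap.fst ℝ (Fin n → ℝ) (Fin m → ℝ)).comp (LinearMap.ker T).subtype with hf
  have hfinj : Function.Injective f := by
    rintro ⟨⟨v, w⟩, hvw⟩ ⟨⟨v', w'⟩, hvw'⟩ h
    simp only [hf, LinearMap.comp_apply, Submodule.subtype_apply, LinearMap.fst_apply] at h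
    subst h
    have : w = w' := hwinj v w w' (LinearMap.mem_ker.mp hvw) (LinearMap.mem_ker.mp hvw')
    simp [this]
  have hrange : LinearMap.range f = S := by
    ext v
    simp only [LinearMap.mem_range, hSmem]
    constructor
    · rintro ⟨⟨⟨v', w⟩, hvw⟩, rfl⟩
      exact ⟨w, LinearMap.mem_ker.mp hvw⟩
    · rintro ⟨w, hw⟩
      exact ⟨⟨(v, w), LinearMap.mem_ker.mpr hw⟩, rfl⟩
  have h1 : Module.finrank ℝ (LinearMap.ker T) = Module.finrank ℝ S := by
    rw [← hrange, LinearMap.finrank_range_of_inj hfinj]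
  have h2 := LinearMap.finrank_range_add_finrank_ker T
  rw [LinearMap.range_eq_top.mpr hT, finrank_top] at h2
  simp only [Module.finrank_prod, Module.finrank_fin_fun] at h2
  rw [h1] at h2
  omega

/-- Dimension counting in the proof of Proposition 2: if `P(μ)` has full row rank `n+p`
(with `p = q+1`) and `w ↦ (Bw, D_(j)w)` is injective (`D_(j)` is `D` with row `j` deleted),
then `dim R⋆(μ)` = m - p` and `dim R⋆_j(μ) = m - p + 1`; in particular `R⋆(μ) ⊊ R⋆_j(μ)`. -/
theorem dim_Rstar_and_RstarJ
    (n m q : ℕ) (hn : 0 < n) (hm : 0 < m)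
    (A : Matrix (Fin n) (Fin n) ℝ) (B : Matrix (Fin n) (Fin m) ℝ)
    (C : Matrix (Fin (q + 1)) (Fin n) ℝ) (D : Matrix (Fin (q + 1)) (Fin m) ℝ)
    (μ : ℝ) (j : Fin (q + 1))
    (hsurj : Function.Surjective fun vw : (Fin n → ℝ) × (Fin m → ℝ) =>
      ((A - μ • 1).mulVec vw.1 + B.mulVec vw.2, C.mulVec vw.1 + D.mulVec vw.2))
    (hinj : Function.Injective fun w : Fin m → ℝ =>
      (B.mulVec w, (D.submatrix j.succAbove id).mulVec w))
    (S Sj : Submodule ℝ (Fin n → ℝ))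
    (hS : (S : Set (Fin n → ℝ)) = RstarSet A B C D μ)
    (hSj : (Sj : Set (Fin n → ℝ)) = RstarJSet A B C D μ j) :
    Module.finrank ℝ ↥S = m - (q + 1) ∧
      Module.finrank ℝ ↥Sj = m - (q + 1) + 1 ∧ S < Sj := by
  classical
  -- submatrix mulVec evaluation
  have hsub : ∀ (M : Matrix (Fin (q+1)) (Fin m) ℝ) (w : Fin m → ℝ) (i : Fin q),
      (M.submatrix j.succAbove id).mulVec w i = M.mulVec w (j.succAbove i) := by
    intro M w i
    simp [Matrix.mulVec, Matrix.submatrix_apply, dotProduct]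
  have hsubC : ∀ (M : Matrix (Fin (q+1)) (Fin n) ℝ) (v : Fin n → ℝ) (i : Fin q),
      (M.submatrix j.succAbove id).mulVec v i = M.mulVec v (j.succAbove i) := by
    intro M v i
    simp [Matrix.mulVec, Matrix.submatrix_apply, dotProduct]
  -- the big map T
  let T : ((Fin n → ℝ) × (Fin m → ℝ)) →ₗ[ℝ] ((Fin n → ℝ) × (Fin (q+1) → ℝ)) :=
    (((A - μ • 1).mulVecLin.comp (LinearMap.fst ℝ _ _)) +
      (B.mulVecLin.comp (LinearMap.snd ℝ _ _))).prod
    ((C.mulVecLin.comp (LinearMap.fst ℝ _ _)) + (D.mulVecLin.comp (LinearMap.snd ℝ _ _)))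
  have hTapp : ∀ vw : (Fin n → ℝ) × (Fin m → ℝ),
      T vw = ((A - μ • 1).mulVec vw.1 + B.mulVec vw.2, C.mulVec vw.1 + D.mulVec vw.2) := by
    intro vw; rfl
  -- the reduced map Tj
  let Tj : ((Fin n → ℝ) × (Fin m → ℝ)) →ₗ[ℝ] ((Fin n → ℝ) × (Fin q → ℝ)) :=
    (((A - μ • 1).mulVecLin.comp (LinearMap.fst ℝ _ _)) +
      (B.mulVecLin.comp (LinearMap.snd ℝ _ _))).prod
    (((C.submatrix j.succAbove id).mulVecLin.comp (LinearMap.fst ℝ _ _)) +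
      ((D.submatrix j.succAbove id).mulVecLin.comp (LinearMap.snd ℝ _ _)))
  have hTjapp : ∀ vw : (Fin n → ℝ) × (Fin m → ℝ),
      Tj vw = ((A - μ • 1).mulVec vw.1 + B.mulVec vw.2,
        (C.submatrix j.succAbove id).mulVec vw.1 + (D.submatrix j.succAbove id).mulVec vw.2) := by
    intro vw; rfl
  -- injectivity on kernels
  have hwinj : ∀ (v : Fin n → ℝ) (w w' : Fin m → ℝ),
      (A - μ • 1).mulVec v + B.mulVec w = 0 →
      (A - μ • 1).mulVec v + B.mulVec w' = 0 →
      (∀ i : Fin q, (C.mulVec v + D.mulVec w) (j.succAbove i) = 0) →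
      (∀ i : Fin q, (C.mulVec v + D.mulVec w') (j.succAbove i) = 0) →
      w = w' := by
    intro v w w' h1 h2 h3 h4
    apply hinj
    simp only [Prod.mk.injEq]
    constructor
    · rw [eq_neg_of_add_eq_zero_right h1, eq_neg_of_add_eq_zero_right h2]
    · funext i
      have e1 := h3 i
      have e2 := h4 i
      rw [hsub, hsub]
      have : D.mulVec w (j.succAbove i) = D.mulVec w' (j.succAbove i) := by
        have := congrArg (fun x => x - (C.mulVec v (j.succAbove i))) (e1.trans e2.symm)
        simp only [Pi.add_apply] at e1 e2
        linarith
      exact this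
  -- finrank of S
  have hSresult : Module.finrank ℝ S = m - (q+1) ∧ (q+1) ≤ m := by
    apply aux_finrank n m (q+1) T
    · intro y
      obtain ⟨vw, hvw⟩ := hsurj y
      exact ⟨vw, by rw [hTapp]; exact hvw⟩
    · intro v
      have hv : v ∈ S ↔ v ∈ RstarSet A B C D μ := by rw [← hS]; rfl
      rw [hv]
      unfold RstarSet
      simp only [Set.mem_setOf_eq, hTapp, Prod.mk_eq_zero]
    · intro v w w' h1 h2
      rw [hTapp, Prod.mk_eq_zero] at h1 h2
      refine hwinj v w w' h1.1 h2.1 (fun i => ?_) (fun i => ?_)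
      · rw [h1.2]; rfl
      · rw [h2.2]; rfl
  -- finrank of Sj
  have hSjresult : Module.finrank ℝ Sj = m - q ∧ q ≤ m := by
    apply aux_finrank n m q Tj
    · intro y
      obtain ⟨vw, hvw⟩ := hsurj (y.1, Fin.insertNth j 0 y.2)
      refine ⟨vw, ?_⟩
      rw [hTjapp]
      simp only at hvw
      have h1 : (A - μ • 1).mulVec vw.1 + B.mulVec vw.2 = y.1 := congrArg Prod.fst hvw
      have h2 : C.mulVec vw.1 + D.mulVec vw.2 = Fin.insertNth j 0 y.2 := congrArg Prod.snd hvw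
      rw [h1]
      refine Prod.ext rfl ?_
      funext i
      simp only [Pi.add_apply]
      rw [hsubC, hsub]
      have := congrFun h2 (j.succAbove i)
      simp only [Pi.add_apply] at this
      rw [this]
      simp
    · intro v
      have hv : v ∈ Sj ↔ v ∈ RstarJSet A B C D μ j := by rw [← hSj]; rfl
      rw [hv]
      unfold RstarJSet
      simp only [Set.mem_setOf_eq, hTjapp, Prod.mk_eq_zero]
      constructor
      · rintro ⟨w, hw1, hw2⟩
        refine ⟨w, hw1, ?_⟩
        funext i
        simp only [Pi.add_apply, Pi.zero_apply]
        rw [hsubC, hsub]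
        have := hw2 (j.succAbove i) (Fin.succAbove_ne j i)
        simpa using this
      · rintro ⟨w, hw1, hw2⟩
        refine ⟨w, hw1, fun i hi => ?_⟩
        obtain ⟨k, rfl⟩ := Fin.exists_succAbove_eq hi
        have := congrFun hw2 k
        simp only [Pi.add_apply, Pi.zero_apply] at this
        rw [hsubC, hsub] at this
        simpa using this
    · intro v w w' h1 h2
      rw [hTjapp, Prod.mk_eq_zero] at h1 h2
      refine hwinj v w w' h1.1 h2.1 (fun i => ?_) (fun i => ?_)
      · have := congrFun h1.2 i
        simp only [Pi.add_apply, Pi.zero_apply] at this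
        rw [hsubC, hsub] at this
        simpa using this
      · have := congrFun h2.2 i
        simp only [Pi.add_apply, Pi.zero_apply] at this
        rw [hsubC, hsub] at this
        simpa using this
  obtain ⟨hd1, hle1⟩ := hSresult
  obtain ⟨hd2, _⟩ := hSjresult
  have hd2' : Module.finrank ℝ Sj = m - (q+1) + 1 := by omega
  refine ⟨hd1, hd2', ?_⟩
  have hle : S ≤ Sj := by
    intro v hv
    have : v ∈ RstarSet A B C D μ := by rw [← hS]; exact hv
    obtain ⟨w, hw1, hw2⟩ := this
    have : v ∈ RstarJSet A B C D μ j := ⟨w, hw1, fun i _ => by rw [hw2]; rfl⟩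
    rw [← SetLike.mem_coe, hSj]
    exact this
  refine lt_of_le_of_ne hle (fun h => ?_)
  rw [h] at hd1
  omega
end

section
/- Let F be an m×n real matrix, let v_1,…,v_n be a basis of ℝ^n, let λ_1,…,λ_p and β_1,…,β_p be real numbers, and suppose: for each i ∈ {1,…,p}, (A+BF)·v_i = λ_i·v_i and (C+DF)·v_i = β_i·e_i (where e_i is the i-th standard basis vector of ℝ^p); and for each i ∈ {p+1,…,n}, (A+BF)·v_i ∈ span{v_{p+1},…,v_n} and (C+DF)·v_i = 0. Then for every ξ₀ ∈ ℝ^n, writing ξ₀ = Σ_{i=1}^n α_i·v_i with α_i ∈ ℝ, one has for every t ∈ ℝ and every k ∈ {1,…,p}: the k-th component of (C+DF)·exp(t·(A+BF))·ξ₀ equals β_k·α_k·exp(λ_k·t). -/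
/-!
Expand `ξ₀` in the basis `v`. Each `v (inl j)` is an eigenvector of `t • (A + B * F)`, so the
exponential series acts on it as the scalar series `exp (λ_j t)`, and `C + D * F` sends it to
`β_j e_j`. The matrices leaving `W = span (v ∘ inr)` invariant form a closed subalgebra, which
therefore contains `exp (t • (A + B * F))`; so the `inr` part of `ξ₀` stays in `W`, which
`C + D * F` annihilates.
-/

open NormedSpace Matrix

namespace Submodule

variable {R n : Type*} [CommSemiring R] [Fintype n] [DecidableEq n]

def matrixStabilizer (W : Submodule R (n → R)) : Subalgebra R (Matrix n n R) where
  carrier := {X | W ≤ W.comap X.mulVecLin}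
  mul_mem' {X Y} hX hY x hx := by
    simpa [← Matrix.mulVec_mulVec] using hX (hY hx)
  add_mem' {X Y} hX hY x hx := by
    simpa [Matrix.add_mulVec] using W.add_mem (hX hx) (hY hx)
  algebraMap_mem' c x hx := by
    simpa [Algebra.algebraMap_eq_smul_one, Matrix.smul_mulVec] using W.smul_mem c hx

theorem mem_matrixStabilizer {W : Submodule R (n → R)} {X : Matrix n n R} :
    X ∈ W.matrixStabilizer ↔ W ≤ W.comap X.mulVecLin :=
  Iff.rfl

theorem isClosed_matrixStabilizer [TopologicalSpace R] [IsTopologicalSemiring R]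
    {W : Submodule R (n → R)} (hW : IsClosed (W : Set (n → R))) :
    IsClosed (W.matrixStabilizer : Set (Matrix n n R)) := by
  have : (W.matrixStabilizer : Set (Matrix n n R)) = ⋂ x ∈ W, (· *ᵥ x) ⁻¹' W := by
    ext X; simp [mem_matrixStabilizer, SetLike.le_def]
  rw [this]
  exact isClosed_biInter fun x _ => hW.preimage (by fun_prop)

end Submodule

namespace Matrix

variable {𝕜 n : Type*} [RCLike 𝕜] [Fintype n] [DecidableEq n]

theorem exp_mem_matrixStabilizer {W : Submodule 𝕜 (n → 𝕜)} {M : Matrix n n 𝕜}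
    (hM : M ∈ W.matrixStabilizer) : exp M ∈ W.matrixStabilizer :=
  exp_mem (R := 𝕜) (W.isClosed_matrixStabilizer W.closed_of_finiteDimensional) hM

theorem pow_mulVec_of_mulVec_eq_smul {R : Type*} [CommSemiring R] {M : Matrix n n R}
    {w : n → R} {c : R} (h : M *ᵥ w = c • w) (k : ℕ) : (M ^ k) *ᵥ w = c ^ k • w := by
  induction k with
  | zero => simp
  | succ k ih => rw [pow_succ', ← mulVec_mulVec, ih, mulVec_smul, h, smul_smul, pow_succ]

theorem exp_mulVec_of_mulVec_eq_smul {M : Matrix n n 𝕜} {w : n → 𝕜} {c : 𝕜}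
    (h : M *ᵥ w = c • w) : exp M *ᵥ w = exp c • w := by
  -- any matrix norm serves to sum the series; `exp` itself does not depend on it
  open scoped Norms.Operator in
  have hM := (exp_series_hasSum_exp' (𝕂 := 𝕜) M).map (mulVec.addMonoidHomLeft w)
    (continuous_id.matrix_mulVec continuous_const)
  refine hM.unique ?_
  convert (exp_series_hasSum_exp' (𝕂 := 𝕜) c).smul_const w using 1
  ext k : 1
  change ((k.factorial : 𝕜)⁻¹ • M ^ k) *ᵥ w = _
  rw [smul_mulVec, pow_mulVec_of_mulVec_eq_smul h, smul_smul, smul_eq_mul]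

end Matrix

theorem single_mode_error_of_eigenstructure_general
    (p r m : ℕ)
    (A : Matrix (Fin (p + r)) (Fin (p + r)) ℝ) (B : Matrix (Fin (p + r)) (Fin m) ℝ)
    (C : Matrix (Fin p) (Fin (p + r)) ℝ) (D : Matrix (Fin p) (Fin m) ℝ)
    (F : Matrix (Fin m) (Fin (p + r)) ℝ)
    (v : Fin p ⊕ Fin r → (Fin (p + r) → ℝ))
    (lam β : Fin p → ℝ)
    (heig : ∀ k : Fin p, (A + B * F).mulVec (v (Sum.inl k)) = lam k • v (Sum.inl k))
    (hout : ∀ k : Fin p,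
      (C + D * F).mulVec (v (Sum.inl k)) = β k • (Pi.single k 1 : Fin p → ℝ))
    (hinv : ∀ i : Fin r, (A + B * F).mulVec (v (Sum.inr i)) ∈
      Submodule.span ℝ (Set.range fun i' : Fin r => v (Sum.inr i')))
    (hnull : ∀ i : Fin r, (C + D * F).mulVec (v (Sum.inr i)) = 0) :
    ∀ (ξ₀ : Fin (p + r) → ℝ) (α : Fin p ⊕ Fin r → ℝ),
      ξ₀ = ∑ i, α i • v i →
      ∀ (t : ℝ) (k : Fin p),
        ((C + D * F).mulVec
            ((NormedSpace.exp (t • (A + B * F))).mulVec ξ₀)) k =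
          β k * α (Sum.inl k) * Real.exp (lam k * t) := by
  intro ξ₀ α hξ₀ t k
  set W := Submodule.span ℝ (Set.range fun i : Fin r => v (Sum.inr i))
  have hstab : A + B * F ∈ W.matrixStabilizer :=
    Submodule.mem_matrixStabilizer.2 <| Submodule.span_le.2 <| Set.range_subset_iff.2 hinv
  have hexp : exp (t • (A + B * F)) ∈ W.matrixStabilizer :=
    exp_mem_matrixStabilizer (Subalgebra.smul_mem _ hstab t)
  have hker : W ≤ LinearMap.ker (C + D * F).mulVecLin :=
    Submodule.span_le.2 <| Set.range_subset_iff.2 hnull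
  have hmode (j : Fin p) : (C + D * F) *ᵥ exp (t • (A + B * F)) *ᵥ v (Sum.inl j) =
      (β j * Real.exp (lam j * t)) • Pi.single j 1 := by
    rw [exp_mulVec_of_mulVec_eq_smul (c := t * lam j) (by rw [smul_mulVec, heig, smul_smul]),
      ← Real.exp_eq_exp_ℝ, mulVec_smul, hout, smul_smul, mul_comm t, mul_comm]
  have hnullmode (i : Fin r) : (C + D * F) *ᵥ exp (t • (A + B * F)) *ᵥ v (Sum.inr i) = 0 :=
    hker (hexp (Submodule.subset_span ⟨i, rfl⟩))
  rw [hξ₀, mulVec_sum, mulVec_sum, Fintype.sum_sum_type]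
  simp only [mulVec_smul, hmode, hnullmode, smul_zero, Finset.sum_const_zero, add_zero,
    Finset.sum_apply, Pi.smul_apply, Pi.single_apply, smul_eq_mul, mul_ite, mul_one, mul_zero,
    Finset.sum_ite_eq, Finset.mem_univ, if_true]
  ring

/-- Sufficiency computation in the proof of Lemma lem:Rosej: given a basis
`v = (v_1,…,v_p, v_{p+1},…,v_n)` of `ℝ^n` (here `n = p + r`, the first `p` vectors indexed by
`Sum.inl`, the rest by `Sum.inr`) such that the first `p` vectors are closed-loop eigenvectors
with `(C+DF)v_i = β_i e_i` and the remaining ones span an `(A+BF)`-invariant subspace of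
`ker(C+DF)`, the tracking error from `ξ₀ = Σ α_i v_i` satisfies
`ε(ξ₀,t)_k = β_k α_k exp(λ_k t)` for each output component `k`. -/
theorem single_mode_error_of_eigenstructure
    (p r m : ℕ) (hp : 0 < p) (hm : 0 < m)
    (A : Matrix (Fin (p + r)) (Fin (p + r)) ℝ) (B : Matrix (Fin (p + r)) (Fin m) ℝ)
    (C : Matrix (Fin p) (Fin (p + r)) ℝ) (D : Matrix (Fin p) (Fin m) ℝ)
    (F : Matrix (Fin m) (Fin (p + r)) ℝ)
    (v : Fin p ⊕ Fin r → (Fin (p + r) → ℝ))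
    (hli : LinearIndependent ℝ v)
    (hspan : Submodule.span ℝ (Set.range v) = ⊤)
    (lam β : Fin p → ℝ)
    (heig : ∀ k : Fin p, (A + B * F).mulVec (v (Sum.inl k)) = lam k • v (Sum.inl k))
    (hout : ∀ k : Fin p,
      (C + D * F).mulVec (v (Sum.inl k)) = β k • (Pi.single k 1 : Fin p → ℝ))
    (hinv : ∀ i : Fin r, (A + B * F).mulVec (v (Sum.inr i)) ∈
      Submodule.span ℝ (Set.range fun i' : Fin r => v (Sum.inr i')))
    (hnull : ∀ i : Fin r, (C + D * F).mulVec (v (Sum.inr i)) = 0) :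
    ∀ (ξ₀ : Fin (p + r) → ℝ) (α : Fin p ⊕ Fin r → ℝ),
      ξ₀ = ∑ i, α i • v i →
      ∀ (t : ℝ) (k : Fin p),
        ((C + D * F).mulVec
            ((NormedSpace.exp (t • (A + B * F))).mulVec ξ₀)) k =
          β k * α (Sum.inl k) * Real.exp (lam k * t) :=
  single_mode_error_of_eigenstructure_general p r m A B C D F v lam β heig hout hinv hnull
end
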